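/- arXiv:1811.07064 — 5 statements merged into one kernel-verified Lean document; each statement's English description precedes it below -/
import Mathlib

section
/- Let k ≥ d ≥ 5 and ν ≥ 1 be fixed integers. For all sufficiently large n there exists a family F ⊆ binom([n],k) that is d-cluster-free, has matching number exactly ν+1, and satisfies |F| = C(n-kν-1, k-1) + ν·EX^{k-2}(n-kν-1, H_{k-1}^{d-2}) + ν. In particular the maximum size of a d-cluster-free family in binom([n],k) with matching number at least ν+1 is at least C(n-kν-1, k-1) + ν·EX^{k-2}(n-kν-1, H_{k-1}^{d-2}) + ν. -/
open Finset
def bl (k i : ℕ) : Finset ℕ := Finset.Ico (i*k) (i*k+k)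

lemma mem_bl {k i y : ℕ} : y ∈ bl k i ↔ i*k ≤ y ∧ y < i*k + k := Finset.mem_Ico

lemma bl_card (k i : ℕ) : (bl k i).card = k := by simp [bl]

lemma bl_disjoint {k i j : ℕ} (h : i ≠ j) : Disjoint (bl k i) (bl k j) := by
  rw [Finset.disjoint_left]
  intro y hy hy'
  rw [mem_bl] at hy hy'
  rcases Nat.lt_or_ge i j with hij | hij
  · have h2 : (i+1)*k ≤ j*k := mul_le_mul_left (by omega) k
    rw [add_one_mul] at h2; omega
  · have h2 : (j+1)*k ≤ i*k := mul_le_mul_left (by omega) k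
    rw [add_one_mul] at h2; omega

lemma bl_unique {k i j y : ℕ} (hy : y ∈ bl k i) (hy' : y ∈ bl k j) : i = j := by
  by_contra h
  exact (Finset.disjoint_left.1 (bl_disjoint h) hy) hy'

lemma bl_subset {k i ν : ℕ} (h : i < ν) : bl k i ⊆ Finset.range (k*ν) := by
  intro y hy; rw [mem_bl] at hy; rw [Finset.mem_range]
  have h2 : (i+1)*k ≤ ν*k := mul_le_mul_left (by omega) k
  rw [add_one_mul] at h2
  have h3 : ν*k = k*ν := Nat.mul_comm _ _
  omega

lemma mem_bl_self {k i j : ℕ} (hj : j < k) : i*k + j ∈ bl k i := by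
  rw [mem_bl]; omega


/-- `F` contains a `d`-cluster of `k`-sets: `d` distinct members whose union has size at most
`2k` and whose common intersection is empty. -/
def HasCluster (d k : ℕ) (F : Finset (Finset ℕ)) : Prop :=
  ∃ A : Fin d → Finset ℕ, Function.Injective A ∧ (∀ i, A i ∈ F) ∧
    (Finset.univ.sup A).card ≤ 2 * k ∧ (⋂ i, (A i : Set ℕ)) = ∅

open scoped Classical in
/-- The matching number of a family: the maximum number of pairwise disjoint members. -/
noncomputable def matchingNumber (F : Finset (Finset ℕ)) : ℕ :=
  (F.powerset.filter
    (fun M : Finset (Finset ℕ) => (M : Set (Finset ℕ)).PairwiseDisjoint id)).sup Finset.card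

/-- `multiEX r v e N` is `EX^r(N, H_v^e)`: the maximum number of edges (counted with
multiplicity) of an `r`-multigraph on `N` vertices (with vertex set `Finset.range N`,
a multigraph being given by a multiplicity function on `r`-sets) in which every
`v`-element vertex subset spans at most `e - 1` edges counted with multiplicity. -/
noncomputable def multiEX (r v e N : ℕ) : ℕ :=
  sSup { t : ℕ | ∃ m : Finset ℕ → ℕ,
    (∀ E, m E ≠ 0 → E ⊆ Finset.range N ∧ E.card = r) ∧
    (∀ S ⊆ Finset.range N, S.card = v → ∑ E ∈ Finset.powersetCard r S, m E ≤ e - 1) ∧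
    t = ∑ E ∈ Finset.powersetCard r (Finset.range N), m E }

theorem stmt8 (k d ν : ℕ) (hd : 5 ≤ d) (hdk : d ≤ k) (hν : 1 ≤ ν) :
    ∃ N : ℕ, ∀ n ≥ N, ∃ F : Finset (Finset ℕ),
      F ⊆ Finset.powersetCard k (Finset.range n) ∧
      ¬ HasCluster d k F ∧
      matchingNumber F = ν + 1 ∧
      F.card = Nat.choose (n - k * ν - 1) (k - 1) +
        ν * multiEX (k - 2) (k - 1) (d - 2) (n - k * ν - 1) + ν := by
  classical
  have hk5 : 5 ≤ k := hd.trans hdk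
  refine ⟨k * ν + k + 1, fun n hn => ?_⟩
  set K := k * ν with hK
  set N := n - k * ν - 1 with hN
  have hkν : k ≤ K := by
    have := Nat.mul_le_mul_left k hν
    omega
  have hNn : N + K + 1 = n := by omega
  have hNk : k - 1 ≤ N := by omega
  -- the extremal multigraph
  set P : Set ℕ := { t : ℕ | ∃ m : Finset ℕ → ℕ,
    (∀ E, m E ≠ 0 → E ⊆ Finset.range N ∧ E.card = k - 2) ∧
    (∀ S ⊆ Finset.range N, S.card = k - 1 →
      ∑ E ∈ Finset.powersetCard (k-2) S, m E ≤ (d-2) - 1) ∧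
    t = ∑ E ∈ Finset.powersetCard (k-2) (Finset.range N), m E } with hP
  have edge_bound : ∀ mm : Finset ℕ → ℕ,
      (∀ S ⊆ Finset.range N, S.card = k - 1 →
        ∑ E ∈ Finset.powersetCard (k-2) S, mm E ≤ (d-2) - 1) →
      ∀ E ∈ Finset.powersetCard (k-2) (Finset.range N), mm E ≤ d - 3 := by
    intro mm hmm E hE
    rw [Finset.mem_powersetCard] at hE
    obtain ⟨Y, hEY, hYN, hYc⟩ := Finset.exists_subsuperset_card_eq hE.1
      (show E.card ≤ k - 1 by rw [hE.2]; omega) (by rw [Finset.card_range]; omega)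
    have h1 := hmm Y hYN hYc
    have h2 : mm E ≤ ∑ E' ∈ Finset.powersetCard (k-2) Y, mm E' :=
      Finset.single_le_sum (fun _ _ => Nat.zero_le _) (Finset.mem_powersetCard.2 ⟨hEY, hE.2⟩)
    omega
  have hPmem : multiEX (k-2) (k-1) (d-2) N ∈ P := by
    have h0 : (0 : ℕ) ∈ P := ⟨fun _ => 0, fun E h => absurd rfl h, fun S _ _ => by simp, by simp⟩
    have hbdd : BddAbove P := by
      refine ⟨(Finset.powersetCard (k-2) (Finset.range N)).card * (d-3), ?_⟩
      rintro t ⟨mm, hmm1, hmm2, rfl⟩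
      calc ∑ E ∈ Finset.powersetCard (k-2) (Finset.range N), mm E
          ≤ ∑ _E ∈ Finset.powersetCard (k-2) (Finset.range N), (d-3) :=
            Finset.sum_le_sum (fun E hE => edge_bound mm hmm2 E hE)
        _ = _ := by rw [Finset.sum_const, smul_eq_mul]
    have : multiEX (k-2) (k-1) (d-2) N = sSup P := rfl
    rw [this]
    exact Nat.sSup_mem ⟨0, h0⟩ hbdd
  obtain ⟨m, hm1, hm2, hm3⟩ := hPmem
  have hm4 : ∀ E ∈ Finset.powersetCard (k-2) (Finset.range N), m E ≤ d - 3 := edge_bound m hm2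
  -- the construction
  set T3 : Finset ((_ : Finset ℕ) × ℕ × ℕ) :=
    (Finset.powersetCard (k-2) (Finset.range N)).sigma
      (fun E => (Finset.range ν) ×ˢ (Finset.range (m E))) with hT3
  set f : ((_ : Finset ℕ) × ℕ × ℕ) → Finset ℕ :=
    (fun p => insert K (insert (p.2.1 * k + p.2.2) (p.1.image (fun e => e + (K+1))))) with hf
  have hfapp : ∀ (E : Finset ℕ) (i j : ℕ), f ⟨E, (i, j)⟩ =
      insert K (insert (i * k + j) (E.image (fun e => e + (K+1)))) := fun _ _ _ => rfl
  set F1 := (Finset.powersetCard (k-1) (Finset.Ico (K+1) n)).image (insert K) with hF1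
  set F2 := (Finset.range ν).image (bl k) with hF2
  set F3 := T3.image f with hF3
  -- basic facts
  have hT3spec : ∀ E i j, (⟨E, (i, j)⟩ : (_ : Finset ℕ) × ℕ × ℕ) ∈ T3 →
      E ⊆ Finset.range N ∧ E.card = k - 2 ∧ i < ν ∧ j < m E := by
    intro E i j hp
    rw [hT3, Finset.mem_sigma, Finset.mem_product, Finset.mem_powersetCard] at hp
    refine ⟨hp.1.1, hp.1.2, ?_, ?_⟩
    · have := hp.2.1; simpa using this
    · have := hp.2.2; simpa using this
  have hvlt : ∀ E i j, (⟨E, (i, j)⟩ : (_ : Finset ℕ) × ℕ × ℕ) ∈ T3 →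
      j < k ∧ i * k + j < K := by
    intro E i j hp
    obtain ⟨h1, h2, h3, h4⟩ := hT3spec E i j hp
    have h5 : m E ≤ d - 3 := hm4 E (Finset.mem_powersetCard.2 ⟨h1, h2⟩)
    have hjk : j < k := by omega
    refine ⟨hjk, ?_⟩
    have := bl_subset (k := k) h3 (mem_bl_self hjk)
    rwa [Finset.mem_range] at this
  have himage : ∀ E : Finset ℕ, E ⊆ Finset.range N →
      ∀ y ∈ E.image (fun e => e + (K+1)), K+1 ≤ y ∧ y < n := by
    intro E hE y hy
    rw [Finset.mem_image] at hy
    obtain ⟨e, he, rfl⟩ := hy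
    have := hE he; rw [Finset.mem_range] at this
    omega
  have hKbl : ∀ c, c < ν → K ∉ bl k c := by
    intro c hc h
    have := bl_subset (ν := ν) hc h
    rw [Finset.mem_range] at this; omega
  have hfK : ∀ p, K ∈ f p := fun p => Finset.mem_insert_self _ _
  have hF1K : ∀ B ∈ F1, K ∈ B := by
    intro B hB; rw [hF1, Finset.mem_image] at hB
    obtain ⟨S, _, rfl⟩ := hB; exact Finset.mem_insert_self _ _
  have hF1spec : ∀ B ∈ F1, ∃ S, S ⊆ Finset.Ico (K+1) n ∧ S.card = k-1 ∧ K ∉ S ∧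
      B = insert K S := by
    intro B hB; rw [hF1, Finset.mem_image] at hB
    obtain ⟨S, hS, rfl⟩ := hB
    rw [Finset.mem_powersetCard] at hS
    refine ⟨S, hS.1, hS.2, fun h => ?_, rfl⟩
    have := hS.1 h; rw [Finset.mem_Ico] at this; omega
  have hF2spec : ∀ B ∈ F2, ∃ c, c < ν ∧ B = bl k c := by
    intro B hB; rw [hF2, Finset.mem_image] at hB
    obtain ⟨c, hc, rfl⟩ := hB
    exact ⟨c, by simpa using hc, rfl⟩
  have small_filter : ∀ E i j, (⟨E, (i, j)⟩ : (_ : Finset ℕ) × ℕ × ℕ) ∈ T3 →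
      (f ⟨E, (i, j)⟩).filter (fun y => y < K) = {i * k + j} := by
    intro E i j hp
    obtain ⟨h1, h2, h3, h4⟩ := hT3spec E i j hp
    obtain ⟨hjk, hv⟩ := hvlt E i j hp
    ext y
    simp only [hf, Finset.mem_filter, Finset.mem_insert, Finset.mem_singleton]
    constructor
    · rintro ⟨hy1 | hy1 | hy1, hy2⟩
      · omega
      · exact hy1
      · have := himage E h1 y hy1; omega
    · rintro rfl; exact ⟨Or.inr (Or.inl rfl), hv⟩
  have big_filter : ∀ E i j, (⟨E, (i, j)⟩ : (_ : Finset ℕ) × ℕ × ℕ) ∈ T3 →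
      (f ⟨E, (i, j)⟩).filter (fun y => K < y) = E.image (fun e => e + (K+1)) := by
    intro E i j hp
    obtain ⟨h1, h2, h3, h4⟩ := hT3spec E i j hp
    obtain ⟨hjk, hv⟩ := hvlt E i j hp
    ext y
    simp only [hf, Finset.mem_filter, Finset.mem_insert]
    constructor
    · rintro ⟨hy1 | hy1 | hy1, hy2⟩
      · omega
      · omega
      · exact hy1
    · intro hy
      have := himage E h1 y hy
      exact ⟨Or.inr (Or.inr hy), by omega⟩
  have hinjadd : Function.Injective (fun e : ℕ => e + (K+1)) := fun a b h => by
    simpa using h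
  have finj : Set.InjOn f ↑T3 := by
    rintro ⟨E, i, j⟩ hp ⟨E', i', j'⟩ hq heq
    rw [Finset.mem_coe] at hp hq
    have hsm : ({i * k + j} : Finset ℕ) = {i' * k + j'} := by
      rw [← small_filter E i j hp, ← small_filter E' i' j' hq, heq]
    have hv : i * k + j = i' * k + j' := by
      rwa [Finset.singleton_inj] at hsm
    obtain ⟨hjk, _⟩ := hvlt E i j hp
    obtain ⟨hjk', _⟩ := hvlt E' i' j' hq
    have hii : i = i' := bl_unique (mem_bl_self hjk) (hv ▸ mem_bl_self hjk')
    have hjj : j = j' := by rw [hii] at hv; omega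
    have hbg : E.image (fun e => e + (K+1)) = E'.image (fun e => e + (K+1)) := by
      rw [← big_filter E i j hp, ← big_filter E' i' j' hq, heq]
    have hEE : E = E' := Finset.image_injective hinjadd hbg
    subst hEE; subst hii; subst hjj; rfl
  -- cardinalities
  have hIcoN : (Finset.Ico (K+1) n).card = N := by rw [Nat.card_Ico]; omega
  have hinsinj : Set.InjOn (insert K) (↑(Finset.powersetCard (k-1) (Finset.Ico (K+1) n)) : Set (Finset ℕ)) := by
    intro S hS S' hS' h
    rw [Finset.mem_coe, Finset.mem_powersetCard] at hS hS'
    have hK1 : K ∉ S := fun hx => by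
      have := hS.1 hx; rw [Finset.mem_Ico] at this; omega
    have hK2 : K ∉ S' := fun hx => by
      have := hS'.1 hx; rw [Finset.mem_Ico] at this; omega
    rw [← Finset.erase_insert hK1, ← Finset.erase_insert hK2, h]
  have hF1card : F1.card = Nat.choose N (k-1) := by
    rw [hF1, Finset.card_image_of_injOn hinsinj, Finset.card_powersetCard, hIcoN]
  have hblinj : Set.InjOn (bl k) (↑(Finset.range ν) : Set ℕ) := by
    intro c hc c' hc' h
    have h1 : c * k ∈ bl k c := by rw [mem_bl]; omega
    exact bl_unique h1 (h ▸ h1)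
  have hF2card : F2.card = ν := by
    rw [hF2, Finset.card_image_of_injOn hblinj, Finset.card_range]
  have hT3card : T3.card = ν * multiEX (k-2) (k-1) (d-2) N := by
    rw [hT3, Finset.card_sigma]
    rw [hm3, Finset.mul_sum]
    refine Finset.sum_congr rfl (fun E _ => ?_)
    rw [Finset.card_product, Finset.card_range, Finset.card_range]
  have hF3card : F3.card = ν * multiEX (k-2) (k-1) (d-2) N := by
    rw [hF3, Finset.card_image_of_injOn finj, hT3card]
  have hd12 : Disjoint F1 F2 := by
    rw [Finset.disjoint_left]
    intro B hB1 hB2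
    obtain ⟨c, hc, hBc⟩ := hF2spec B hB2
    exact hKbl c hc (hBc ▸ hF1K B hB1)
  have hd13 : Disjoint F1 F3 := by
    rw [Finset.disjoint_left]
    intro B hB1 hB3
    rw [hF3, Finset.mem_image] at hB3
    obtain ⟨p, hp, rfl⟩ := hB3
    obtain ⟨E, i, j⟩ := p
    obtain ⟨S, hS, hScard, hKS, hB⟩ := hF1spec _ hB1
    obtain ⟨hjk, hv⟩ := hvlt E i j hp
    have hvin : i * k + j ∈ insert K S := by
      rw [← hB, hfapp]; exact Finset.mem_insert_of_mem (Finset.mem_insert_self _ _)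
    rw [Finset.mem_insert] at hvin
    rcases hvin with h | h
    · omega
    · have := hS h; rw [Finset.mem_Ico] at this; omega
  have hd23 : Disjoint F2 F3 := by
    rw [Finset.disjoint_left]
    intro B hB2 hB3
    rw [hF3, Finset.mem_image] at hB3
    obtain ⟨p, hp, rfl⟩ := hB3
    obtain ⟨c, hc, hB⟩ := hF2spec _ hB2
    exact hKbl c hc (hB ▸ hfK p)
  have hFsub : ∀ B ∈ F1 ∪ F2 ∪ F3, B ⊆ Finset.range n ∧ B.card = k := by
    intro B hB
    rw [Finset.mem_union, Finset.mem_union] at hB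
    rcases hB with (hB | hB) | hB
    · obtain ⟨S, hS, hScard, hKS, rfl⟩ := hF1spec _ hB
      constructor
      · intro y hy
        rw [Finset.mem_insert] at hy
        rw [Finset.mem_range]
        rcases hy with rfl | hy
        · omega
        · have := hS hy; rw [Finset.mem_Ico] at this; omega
      · rw [Finset.card_insert_of_notMem hKS, hScard]; omega
    · obtain ⟨c, hc, rfl⟩ := hF2spec _ hB
      constructor
      · intro y hy
        have := bl_subset hc hy
        rw [Finset.mem_range] at this ⊢; omega
      · exact bl_card k c
    · rw [hF3, Finset.mem_image] at hB
      obtain ⟨p, hp, rfl⟩ := hB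
      obtain ⟨E, i, j⟩ := p
      obtain ⟨h1, h2, h3, h4⟩ := hT3spec E i j hp
      obtain ⟨hjk, hv⟩ := hvlt E i j hp
      constructor
      · intro y hy
        rw [hfapp] at hy
        rw [Finset.mem_insert, Finset.mem_insert] at hy
        rw [Finset.mem_range]
        rcases hy with rfl | rfl | hy
        · omega
        · omega
        · exact (himage _ h1 y hy).2
      · rw [hfapp]
        have hni : i * k + j ∉ E.image (fun e => e + (K+1)) := fun h => by
          have := himage _ h1 _ h; omega
        have hnK : K ∉ insert (i * k + j) (E.image (fun e => e + (K+1))) := by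
          rw [Finset.mem_insert]
          rintro (h | h)
          · omega
          · have := himage _ h1 _ h; omega
        rw [Finset.card_insert_of_notMem hnK, Finset.card_insert_of_notMem hni,
          Finset.card_image_of_injective _ hinjadd, h2]
        omega
  refine ⟨F1 ∪ F2 ∪ F3, ?_, ?_, ?_, ?_⟩
  · intro B hB
    rw [Finset.mem_powersetCard]
    exact hFsub B hB
  · -- cluster-free
    rintro ⟨A, hAinj, hAmem, hAcard, hAint⟩
    set U := Finset.univ.sup A with hU
    have hAsubU : ∀ i, A i ⊆ U := fun i => Finset.le_sup (Finset.mem_univ i)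
    have classify : ∀ i, K ∈ A i ∨ ∃ c, c < ν ∧ A i = bl k c := by
      intro i
      have h := hAmem i
      rw [Finset.mem_union, Finset.mem_union] at h
      rcases h with (h | h) | h
      · exact Or.inl (hF1K _ h)
      · exact Or.inr (hF2spec _ h)
      · rw [hF3, Finset.mem_image] at h
        obtain ⟨p, hp, hpe⟩ := h
        exact Or.inl (hpe ▸ hfK p)
    by_cases hbex : ∃ i c, c < ν ∧ A i = bl k c
    case neg =>
      have hmemK : (K : ℕ) ∈ ⋂ i, (A i : Set ℕ) := by
        rw [Set.mem_iInter]
        intro i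
        rcases classify i with h | ⟨c, hc, hbl⟩
        · exact h
        · exact absurd ⟨i, c, hc, hbl⟩ hbex
      rw [hAint] at hmemK
      exact hmemK
    case pos =>
    obtain ⟨i0, c, hc, hA0⟩ := hbex
    by_cases htwo : ∃ i1 c1, c1 < ν ∧ c1 ≠ c ∧ A i1 = bl k c1
    case pos =>
      obtain ⟨i1, c1, hc1, hc1c, hA1⟩ := htwo
      have hdisjB : Disjoint (bl k c) (bl k c1) := bl_disjoint (fun h => hc1c h.symm)
      have hsub : bl k c ∪ bl k c1 ⊆ U := Finset.union_subset (hA0 ▸ hAsubU i0) (hA1 ▸ hAsubU i1)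
      have hcard2 : (bl k c ∪ bl k c1).card = 2 * k := by
        rw [Finset.card_union_of_disjoint hdisjB, bl_card, bl_card]; omega
      have hUeq : bl k c ∪ bl k c1 = U :=
        Finset.eq_of_subset_of_card_le hsub (by omega)
      have hex2 : ∃ i2 : Fin d, i2 ≠ i0 ∧ i2 ≠ i1 := by
        by_contra h
        push_neg at h
        have hsub2 : (Finset.univ : Finset (Fin d)) ⊆ {i0, i1} := by
          intro i _
          rw [Finset.mem_insert, Finset.mem_singleton]
          by_cases h1 : i = i0
          · exact Or.inl h1
          · exact Or.inr (h i h1)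
        have hle2 := Finset.card_le_card hsub2
        have : ({i0, i1} : Finset (Fin d)).card ≤ 2 := Finset.card_insert_le _ _ |>.trans (by simp)
        rw [Finset.card_univ, Fintype.card_fin] at hle2
        omega
      obtain ⟨i2, h20, h21⟩ := hex2
      have hKU : K ∉ U := by
        rw [← hUeq]
        intro h
        rcases Finset.mem_union.1 h with h | h
        exacts [hKbl c hc h, hKbl c1 hc1 h]
      rcases classify i2 with h | ⟨c2, hc2, hA2⟩
      · exact hKU (hAsubU i2 h)
      · have hcc : c2 ≠ c := fun h => h20 (hAinj (by rw [hA2, hA0, h]))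
        have hcc1 : c2 ≠ c1 := fun h => h21 (hAinj (by rw [hA2, hA1, h]))
        have hmm : c2 * k ∈ bl k c2 := by rw [mem_bl]; omega
        have hmem2 : c2 * k ∈ U := hAsubU i2 (hA2 ▸ hmm)
        rw [← hUeq, Finset.mem_union] at hmem2
        rcases hmem2 with h | h
        · exact Finset.disjoint_left.1 (bl_disjoint hcc) hmm h
        · exact Finset.disjoint_left.1 (bl_disjoint hcc1) hmm h
    case neg =>
      push_neg at htwo
      have hclass : ∀ i, A i = bl k c ∨ K ∈ A i := by
        intro i
        rcases classify i with h | ⟨c', hc', hA'⟩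
        · exact Or.inr h
        · by_cases h2 : c' = c
          · exact Or.inl (h2 ▸ hA')
          · exact absurd hA' (htwo i c' hc' h2)
      have hxA : ∃ i, K ∈ A i := by
        by_contra h
        push_neg at h
        have h0 : A ⟨0, by omega⟩ = bl k c := (hclass _).resolve_right (h _)
        have h1 : A ⟨1, by omega⟩ = bl k c := (hclass _).resolve_right (h _)
        have h2 := hAinj (h0.trans h1.symm)
        simp only [Fin.mk.injEq] at h2
        omega
      obtain ⟨ix, hKAix⟩ := hxA
      have hKU : K ∈ U := hAsubU ix hKAix
      have hBcU : bl k c ⊆ U := hA0 ▸ hAsubU i0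
      have hUrange : U ⊆ Finset.range n := by
        intro y hy
        rw [hU, Finset.mem_sup] at hy
        obtain ⟨i, _, hyi⟩ := hy
        exact (hFsub (A i) (hAmem i)).1 hyi
      set C := U.filter (fun y => K < y) with hC
      set V := U.filter (fun y => y < K ∧ y ∉ bl k c) with hV
      have hbl_lt : ∀ y ∈ bl k c, y < K := fun y hy => Finset.mem_range.1 (bl_subset hc hy)
      have hWsub : (bl k c ∪ {K}) ∪ (C ∪ V) ⊆ U := by
        intro y hy
        rcases Finset.mem_union.1 hy with h | h
        · rcases Finset.mem_union.1 h with h | h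
          · exact hBcU h
          · rw [Finset.mem_singleton] at h; exact h ▸ hKU
        · rcases Finset.mem_union.1 h with h | h
          exacts [(Finset.mem_filter.1 h).1, (Finset.mem_filter.1 h).1]
      have hdCV : Disjoint C V := by
        rw [Finset.disjoint_left]; intro y hy hy'
        have h1 := (Finset.mem_filter.1 hy).2
        have h2 := (Finset.mem_filter.1 hy').2
        omega
      have hdBK : Disjoint (bl k c) ({K} : Finset ℕ) := by
        rw [Finset.disjoint_right]; intro y hy hy'
        rw [Finset.mem_singleton] at hy
        exact hKbl c hc (hy ▸ hy')
      have hdBKCV : Disjoint (bl k c ∪ {K}) (C ∪ V) := by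
        rw [Finset.disjoint_left]
        intro y hy hy'
        rcases Finset.mem_union.1 hy with h | h
        · have h1 := hbl_lt y h
          rcases Finset.mem_union.1 hy' with h2 | h2
          · have := (Finset.mem_filter.1 h2).2; omega
          · exact (Finset.mem_filter.1 h2).2.2 h
        · rw [Finset.mem_singleton] at h; subst h
          rcases Finset.mem_union.1 hy' with h2 | h2
          · have := (Finset.mem_filter.1 h2).2; omega
          · have := (Finset.mem_filter.1 h2).2; omega
      have hcount : k + 1 + C.card + V.card ≤ 2 * k := by
        have h1 := Finset.card_le_card hWsub
        rw [Finset.card_union_of_disjoint hdBKCV, Finset.card_union_of_disjoint hdBK,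
          Finset.card_union_of_disjoint hdCV, bl_card, Finset.card_singleton] at h1
        omega
      set D := C.image (fun y => y - (K+1)) with hD
      have hDcard : D.card = C.card := Finset.card_image_of_injOn (by
        intro a ha b hb h
        have ha' := (Finset.mem_filter.1 (Finset.mem_coe.1 ha)).2
        have hb' := (Finset.mem_filter.1 (Finset.mem_coe.1 hb)).2
        have h' : a - (K+1) = b - (K+1) := h
        omega)
      have hDsub : D ⊆ Finset.range N := by
        intro y hy
        rw [hD, Finset.mem_image] at hy
        obtain ⟨z, hz, rfl⟩ := hy
        have h1 := (Finset.mem_filter.1 hz).2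
        have h2 := Finset.mem_range.1 (hUrange (Finset.mem_filter.1 hz).1)
        rw [Finset.mem_range]; omega
      obtain ⟨Y, hDY, hYN, hYc⟩ := Finset.exists_subsuperset_card_eq hDsub
        (by omega : D.card ≤ k - 1) (by rw [Finset.card_range]; omega)
      set G1 := F1.filter (fun B => B ⊆ U) with hG1
      set T3' := T3.filter (fun p => f p ⊆ U) with hT3'
      have hkey : Finset.univ.image A ⊆ insert (bl k c) (G1 ∪ F3.filter (fun B => B ⊆ U)) := by
        intro B hB
        rw [Finset.mem_image] at hB
        obtain ⟨i, _, rfl⟩ := hB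
        rcases hclass i with h | h
        · rw [h]; exact Finset.mem_insert_self _ _
        · apply Finset.mem_insert_of_mem
          have hmemF := hAmem i
          rw [Finset.mem_union, Finset.mem_union] at hmemF
          rcases hmemF with (h1 | h1) | h1
          · exact Finset.mem_union_left _ (Finset.mem_filter.2 ⟨h1, hAsubU i⟩)
          · obtain ⟨c', hc', he⟩ := hF2spec _ h1
            exact absurd (he ▸ h) (hKbl c' hc')
          · exact Finset.mem_union_right _ (Finset.mem_filter.2 ⟨h1, hAsubU i⟩)
      have hG3eq : F3.filter (fun B => B ⊆ U) = T3'.image f := by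
        rw [hF3, hT3', Finset.filter_image]
      have hG1spec : ∀ B ∈ G1, B = insert K C ∧ V = ∅ := by
        intro B hB
        rw [hG1, Finset.mem_filter] at hB
        obtain ⟨S, hS, hScard, hKS, rfl⟩ := hF1spec _ hB.1
        have hSC : S ⊆ C := by
          intro y hy
          rw [hC, Finset.mem_filter]
          have h1 := hS hy; rw [Finset.mem_Ico] at h1
          exact ⟨hB.2 (Finset.mem_insert_of_mem hy), by omega⟩
        have hSCc := Finset.card_le_card hSC
        have hCS : S = C := Finset.eq_of_subset_of_card_le hSC (by omega)
        have hV0 : V = ∅ := Finset.card_eq_zero.1 (by omega)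
        exact ⟨by rw [hCS], hV0⟩
      have hG1card : G1.card ≤ 1 := Finset.card_le_one.2
        (fun a ha b hb => by rw [(hG1spec a ha).1, (hG1spec b hb).1])
      have hEsubD : ∀ E i j, (⟨E, (i, j)⟩ : (_ : Finset ℕ) × ℕ × ℕ) ∈ T3' → E ⊆ D := by
        intro E i j hp
        rw [hT3', Finset.mem_filter] at hp
        obtain ⟨hpT, hpU⟩ := hp
        obtain ⟨h1, h2, h3, h4⟩ := hT3spec E i j hpT
        intro e he
        have he1 : e + (K+1) ∈ f ⟨E, (i, j)⟩ := by
          rw [hfapp]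
          exact Finset.mem_insert_of_mem (Finset.mem_insert_of_mem (Finset.mem_image_of_mem _ he))
        have he2 : e + (K+1) ∈ C := Finset.mem_filter.2 ⟨hpU he1, by omega⟩
        rw [hD, Finset.mem_image]
        exact ⟨e + (K+1), he2, by omega⟩
      have hsplit3 := Finset.card_filter_add_card_filter_not
        (s := T3') (p := fun p => p.2.1 = c)
      set T1 := T3'.filter (fun p => p.2.1 = c) with hT1
      set T2 := T3'.filter (fun p => ¬ p.2.1 = c) with hT2
      have hT1card : T1.card ≤ d - 3 := by
        have hsub1 : T1 ⊆ (Finset.powersetCard (k-2) Y).sigma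
            (fun E => ({c} : Finset ℕ) ×ˢ Finset.range (m E)) := by
          rintro ⟨E, i, j⟩ hp
          rw [hT1, Finset.mem_filter] at hp
          obtain ⟨hp', hic⟩ := hp
          have hpT : (⟨E, (i, j)⟩ : (_ : Finset ℕ) × ℕ × ℕ) ∈ T3 := by
            rw [hT3', Finset.mem_filter] at hp'; exact hp'.1
          obtain ⟨h1, h2, h3, h4⟩ := hT3spec E i j hpT
          rw [Finset.mem_sigma, Finset.mem_product, Finset.mem_powersetCard]
          refine ⟨⟨(hEsubD E i j hp').trans hDY, h2⟩, ?_, ?_⟩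
          · simpa using hic
          · simpa using h4
        have hc1 := Finset.card_le_card hsub1
        have hc2 : ((Finset.powersetCard (k-2) Y).sigma
            (fun E => ({c} : Finset ℕ) ×ˢ Finset.range (m E))).card
            = ∑ E ∈ Finset.powersetCard (k-2) Y, m E := by
          rw [Finset.card_sigma]
          exact Finset.sum_congr rfl (fun E _ => by
            rw [Finset.card_product, Finset.card_singleton, Finset.card_range, one_mul])
        have hc3 := hm2 Y hYN hYc
        omega
      have hT2V : ∀ E i j, (⟨E, (i, j)⟩ : (_ : Finset ℕ) × ℕ × ℕ) ∈ T2 → i * k + j ∈ V := by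
        intro E i j hp
        rw [hT2, Finset.mem_filter] at hp
        obtain ⟨hp', hic⟩ := hp
        have hpT : (⟨E, (i, j)⟩ : (_ : Finset ℕ) × ℕ × ℕ) ∈ T3 := by
          rw [hT3', Finset.mem_filter] at hp'; exact hp'.1
        have hvU : i * k + j ∈ U := by
          rw [hT3', Finset.mem_filter] at hp'
          exact hp'.2 (by rw [hfapp]; exact Finset.mem_insert_of_mem (Finset.mem_insert_self _ _))
        obtain ⟨hjk, hvlt'⟩ := hvlt E i j hpT
        rw [hV, Finset.mem_filter]
        exact ⟨hvU, hvlt', fun h => hic (bl_unique (mem_bl_self hjk) h)⟩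
      have hT2card : T2.card ≤ 1 := by
        rw [Finset.card_le_one]
        rintro ⟨E, i, j⟩ ha ⟨E', i', j'⟩ hb
        have hva := hT2V E i j ha
        have hvb := hT2V E' i' j' hb
        have haT3' : (⟨E, (i, j)⟩ : (_ : Finset ℕ) × ℕ × ℕ) ∈ T3' := by
          rw [hT2, Finset.mem_filter] at ha; exact ha.1
        have hbT3' : (⟨E', (i', j')⟩ : (_ : Finset ℕ) × ℕ × ℕ) ∈ T3' := by
          rw [hT2, Finset.mem_filter] at hb; exact hb.1
        have haT3 : (⟨E, (i, j)⟩ : (_ : Finset ℕ) × ℕ × ℕ) ∈ T3 := by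
          rw [hT3', Finset.mem_filter] at haT3'; exact haT3'.1
        have hbT3 : (⟨E', (i', j')⟩ : (_ : Finset ℕ) × ℕ × ℕ) ∈ T3 := by
          rw [hT3', Finset.mem_filter] at hbT3'; exact hbT3'.1
        obtain ⟨hE1, hE2, hE3, hE4⟩ := hT3spec E i j haT3
        obtain ⟨hE1', hE2', hE3', hE4'⟩ := hT3spec E' i' j' hbT3
        have hVpos : 1 ≤ V.card := Finset.one_le_card.2 ⟨_, hva⟩
        have hED : E = D := by
          apply Finset.eq_of_subset_of_card_le (hEsubD E i j haT3')
          omega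
        have hED' : E' = D := by
          apply Finset.eq_of_subset_of_card_le (hEsubD E' i' j' hbT3')
          omega
        have hDE : E.card = D.card := by rw [hED]
        have hVone : V.card ≤ 1 := by omega
        have hvv : i * k + j = i' * k + j' := Finset.card_le_one.1 hVone _ hva _ hvb
        obtain ⟨hjk, _⟩ := hvlt E i j haT3
        obtain ⟨hjk', _⟩ := hvlt E' i' j' hbT3
        have hii : i = i' := bl_unique (mem_bl_self hjk) (hvv ▸ mem_bl_self hjk')
        have hjj : j = j' := by rw [hii] at hvv; omega
        have hEE : E = E' := hED.trans hED'.symm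
        subst hEE; subst hii; subst hjj; rfl
      have hkeycard : d ≤ 1 + (G1.card + (T1.card + T2.card)) := by
        have h1 : (Finset.univ.image A).card = d := by
          rw [Finset.card_image_of_injective _ hAinj, Finset.card_univ, Fintype.card_fin]
        have h2 := Finset.card_le_card hkey
        have h3 := Finset.card_insert_le (bl k c) (G1 ∪ F3.filter (fun B => B ⊆ U))
        have h4 := Finset.card_union_le G1 (F3.filter (fun B => B ⊆ U))
        have h5 : (F3.filter (fun B => B ⊆ U)).card ≤ T3'.card := by
          rw [hG3eq]; exact Finset.card_image_le
        omega
      by_cases hG1e : G1 = ∅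
      · have hG10 : G1.card = 0 := by rw [hG1e]; rfl
        omega
      · obtain ⟨B0, hB0⟩ := Finset.nonempty_iff_ne_empty.2 hG1e
        have hV0 := (hG1spec B0 hB0).2
        have hT20 : T2 = ∅ := by
          rw [Finset.eq_empty_iff_forall_notMem]
          rintro ⟨E, i, j⟩ h
          have := hT2V E i j h
          rw [hV0] at this
          exact absurd this (Finset.notMem_empty _)
        have hT2z : T2.card = 0 := by rw [hT20]; rfl
        omega
  · -- matching number
    have hstar : Finset.Ico (K+1) (K+k) ∈ Finset.powersetCard (k-1) (Finset.Ico (K+1) n) := by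
      rw [Finset.mem_powersetCard]
      constructor
      · exact Finset.Ico_subset_Ico le_rfl (by omega)
      · rw [Nat.card_Ico]; omega
    have hstarF : insert K (Finset.Ico (K+1) (K+k)) ∈ F1 := by
      rw [hF1]; exact Finset.mem_image_of_mem _ hstar
    have hstarK : ∀ y ∈ insert K (Finset.Ico (K+1) (K+k)), K ≤ y := by
      intro y hy
      rw [Finset.mem_insert, Finset.mem_Ico] at hy
      omega
    have hblock : ∀ c, c < ν → Disjoint (insert K (Finset.Ico (K+1) (K+k))) (bl k c) := by
      intro c hc
      rw [Finset.disjoint_left]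
      intro y hy hy'
      have h1 := bl_subset hc hy'
      rw [Finset.mem_range] at h1
      exact absurd (hstarK y hy) (by omega)
    apply le_antisymm
    · rw [matchingNumber]
      apply Finset.sup_le
      intro M hM
      rw [Finset.mem_filter, Finset.mem_powerset] at hM
      obtain ⟨hMF, hMdisj⟩ := hM
      have hsplit := Finset.card_filter_add_card_filter_not
        (s := M) (p := fun B => K ∈ B)
      have h1 : (M.filter (fun B => K ∈ B)).card ≤ 1 := by
        rw [Finset.card_le_one]
        intro a ha b hb
        rw [Finset.mem_filter] at ha hb
        by_contra hab
        have hdj := hMdisj (Finset.mem_coe.2 ha.1) (Finset.mem_coe.2 hb.1) hab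
        exact Finset.disjoint_left.1 hdj ha.2 hb.2
      have h2 : (M.filter (fun B => K ∉ B)).card ≤ ν := by
        have hsub : M.filter (fun B => K ∉ B) ⊆ F2 := by
          intro B hB
          rw [Finset.mem_filter] at hB
          have hBF := hMF hB.1
          rw [Finset.mem_union, Finset.mem_union] at hBF
          rcases hBF with (h | h) | h
          · exact absurd (hF1K B h) hB.2
          · exact h
          · rw [hF3, Finset.mem_image] at h
            obtain ⟨p, hp, rfl⟩ := h
            exact absurd (hfK p) hB.2
        calc (M.filter (fun B => K ∉ B)).card ≤ F2.card := Finset.card_le_card hsub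
          _ = ν := hF2card
      omega
    · rw [matchingNumber]
      have hM0 : insert (insert K (Finset.Ico (K+1) (K+k))) F2 ∈
          Finset.filter (fun M : Finset (Finset ℕ) => (M : Set (Finset ℕ)).PairwiseDisjoint id)
            ((F1 ∪ F2 ∪ F3).powerset) := by
        rw [Finset.mem_filter, Finset.mem_powerset]
        constructor
        · intro B hB
          rw [Finset.mem_insert] at hB
          rcases hB with rfl | hB
          · exact Finset.mem_union_left _ (Finset.mem_union_left _ hstarF)
          · exact Finset.mem_union_left _ (Finset.mem_union_right _ hB)
        · intro a ha b hb hab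
          rw [Finset.mem_coe, Finset.mem_insert] at ha hb
          rcases ha with rfl | ha <;> rcases hb with rfl | hb
          · exact absurd rfl hab
          · obtain ⟨c, hc, rfl⟩ := hF2spec _ hb
            exact hblock c hc
          · obtain ⟨c, hc, rfl⟩ := hF2spec _ ha
            exact (hblock c hc).symm
          · obtain ⟨c, hc, rfl⟩ := hF2spec _ ha
            obtain ⟨c', hc', rfl⟩ := hF2spec _ hb
            exact bl_disjoint (fun h => hab (by rw [h]))
      have hle := Finset.le_sup (f := Finset.card) hM0
      have hcard : (insert (insert K (Finset.Ico (K+1) (K+k))) F2).card = ν + 1 := by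
        rw [Finset.card_insert_of_notMem, hF2card]
        intro h
        obtain ⟨c, hc, hceq⟩ := hF2spec _ h
        exact hKbl c hc (hceq ▸ Finset.mem_insert_self _ _)
      omega
  · -- cardinality
    rw [Finset.card_union_of_disjoint, Finset.card_union_of_disjoint hd12,
      hF1card, hF2card, hF3card]
    · ring
    · rw [Finset.disjoint_union_left]; exact ⟨hd13, hd23⟩
end

section
/- Let k ≥ d ≥ 3 and t ≥ 2 be fixed integers. For all sufficiently large n, the maximum size of a family F ⊆ binom([n],k) that is d-cluster-free but not t-wise intersecting equals the maximum size of a family F ⊆ binom([n],k) that is d-cluster-free but not intersecting. -/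
open Finset

/-- `F` is not `t`-wise intersecting: there exist `t` distinct members of `F` with empty
common intersection. -/
def NotTWiseIntersecting (t : ℕ) (F : Finset (Finset ℕ)) : Prop :=
  ∃ A : Fin t → Finset ℕ, Function.Injective A ∧ (∀ i, A i ∈ F) ∧ (⋂ i, (A i : Set ℕ)) = ∅

/-- The maximum size of a family `F ⊆ binom([n],k)` that is `d`-cluster-free but not
`t`-wise intersecting. -/
noncomputable def maxSize (n k d t : ℕ) : ℕ :=
  sSup { s : ℕ | ∃ F : Finset (Finset ℕ), F ⊆ Finset.powersetCard k (Finset.range n) ∧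
    ¬ HasCluster d k F ∧ NotTWiseIntersecting t F ∧ F.card = s }


lemma pow_le_fact_mul_choose (m r : ℕ) : (m + 1 - r) ^ r ≤ r.factorial * m.choose r := by
  induction r with
  | zero => simp
  | succ r ih =>
    have h1 : m + 1 - (r + 1) = m - r := by omega
    rw [h1]
    calc (m - r) ^ (r + 1) = (m - r) ^ r * (m - r) := by ring
    _ ≤ (m + 1 - r) ^ r * (m - r) := by
        exact Nat.mul_le_mul_right _ (Nat.pow_le_pow_left (by omega) _)
    _ ≤ (r.factorial * m.choose r) * (m - r) := Nat.mul_le_mul_right _ ih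
    _ = r.factorial * (m.choose (r+1) * (r+1)) := by
        rw [mul_assoc, ← Nat.choose_succ_right_eq]
    _ = (r+1).factorial * m.choose (r+1) := by rw [Nat.factorial_succ]; ring

lemma main_ineq (k t n : ℕ) (hk : 3 ≤ k)
    (hn : 2^(k-1)*(k-1).factorial*k^2 + t*(k-1).factorial + 4*k ≤ n) :
    k^2 * n.choose (k-2) ≤ (n-k-1).choose (k-1) ∧ t ≤ (n-k-1).choose (k-1) := by
  have hfacpos : 0 < (k-1).factorial := Nat.factorial_pos _
  have hpowpos : 0 < 2^(k-1) := Nat.pow_pos (by norm_num)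
  have hkk : 1 ≤ k^2 := Nat.one_le_pow _ _ (by omega)
  have hbig : 2^(k-1)*(k-1).factorial*k^2 ≤ n := by omega
  have htn : t * (k-1).factorial ≤ n - 2*k + 1 := by omega
  have hn4 : 4*k ≤ n := by omega
  have hP : (n - k - 1) + 1 - (k - 1) = n - 2*k + 1 := by omega
  have hlow : (n - 2*k + 1) ^ (k-1) ≤ (k-1).factorial * (n-k-1).choose (k-1) := by
    have := pow_le_fact_mul_choose (n-k-1) (k-1); rwa [hP] at this
  set P := n - 2*k + 1 with hPdef
  have hnP : n ≤ 2 * P := by omega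
  have hcore : (k-1).factorial * (k^2 * n^(k-2)) ≤ P^(k-1) := by
    have h2 : 2^(k-1) * ((k-1).factorial * (k^2 * n^(k-2))) ≤ n^(k-1) := by
      have hsplit : n^(k-1) = n * n^(k-2) := by
        rw [← pow_succ']
        congr 1; omega
      rw [hsplit]
      calc 2^(k-1) * ((k-1).factorial * (k^2 * n^(k-2)))
          = (2^(k-1) * (k-1).factorial * k^2) * n^(k-2) := by ring
        _ ≤ n * n^(k-2) := Nat.mul_le_mul_right _ hbig
    have h3 : n^(k-1) ≤ 2^(k-1) * P^(k-1) := by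
      calc n^(k-1) ≤ (2*P)^(k-1) := Nat.pow_le_pow_left hnP _
        _ = 2^(k-1) * P^(k-1) := by rw [Nat.mul_pow]
    exact Nat.le_of_mul_le_mul_left (le_trans h2 h3) hpowpos
  constructor
  · have h1 : (k-1).factorial * (k^2 * n.choose (k-2)) ≤ (k-1).factorial * (k^2 * n^(k-2)) :=
      Nat.mul_le_mul_left _ (Nat.mul_le_mul_left _ (Nat.choose_le_pow _ _))
    exact Nat.le_of_mul_le_mul_left (le_trans (le_trans h1 hcore) hlow) hfacpos
  · have h2 : P ≤ P^(k-1) := Nat.le_self_pow (by omega) _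
    have : (k-1).factorial * t ≤ (k-1).factorial * (n-k-1).choose (k-1) := by
      calc (k-1).factorial * t = t * (k-1).factorial := by ring
        _ ≤ P := htn
        _ ≤ P^(k-1) := h2
        _ ≤ _ := hlow
    exact Nat.le_of_mul_le_mul_left this hfacpos


/-- from a disjoint pair and enough members, get t members with empty intersection -/
lemma notT_of_pair {F : Finset (Finset ℕ)} {B₁ B₂ : Finset ℕ} (h1 : B₁ ∈ F) (h2 : B₂ ∈ F)
    (hne : B₁ ≠ B₂) (hdisj : ∀ x, ¬(x ∈ B₁ ∧ x ∈ B₂)) {t : ℕ} (ht2 : 2 ≤ t)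
    (htc : t ≤ F.card) : NotTWiseIntersecting t F := by
  have hsub : {B₁, B₂} ⊆ F := by
    intro x hx; rcases Finset.mem_insert.mp hx with rfl | hx
    · exact h1
    · exact (Finset.mem_singleton.mp hx) ▸ h2
  have hcard2 : ({B₁, B₂} : Finset (Finset ℕ)).card ≤ t := by
    have := Finset.card_insert_le B₁ {B₂}
    simp only [Finset.card_singleton] at this
    omega
  obtain ⟨u, hsu, huF, hcard⟩ := Finset.exists_subsuperset_card_eq hsub hcard2 htc
  let e : Fin t ≃ {x // x ∈ u} := ((u.equivFin).trans (finCongr hcard)).symm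
  refine ⟨fun i => (e i : Finset ℕ), ?_, ?_, ?_⟩
  · intro i j hij
    exact e.injective (Subtype.ext hij)
  · intro i; exact huF (e i).2
  · rw [Set.eq_empty_iff_forall_notMem]
    intro x hx
    have hmem : ∀ B ∈ u, x ∈ B := by
      intro B hB
      have : ∃ i, (e i : Finset ℕ) = B := ⟨e.symm ⟨B, hB⟩, by simp⟩
      obtain ⟨i, rfl⟩ := this
      exact Set.mem_iInter.mp hx i
    exact hdisj x ⟨hmem B₁ (hsu (by simp)), hmem B₂ (hsu (by simp))⟩

/-- extract a disjoint pair from NotTWiseIntersecting 2 -/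
lemma pair_of_notT2 {F : Finset (Finset ℕ)} (h : NotTWiseIntersecting 2 F) :
    ∃ B₁ B₂, B₁ ∈ F ∧ B₂ ∈ F ∧ B₁ ≠ B₂ ∧ ∀ x, ¬(x ∈ B₁ ∧ x ∈ B₂) := by
  obtain ⟨A, hinj, hmem, hI⟩ := h
  refine ⟨A 0, A 1, hmem 0, hmem 1, fun h => by exact absurd (hinj h) (by decide), ?_⟩
  intro x ⟨hx0, hx1⟩
  have : x ∈ ⋂ i, ((A i : Set ℕ)) := by
    rw [Set.mem_iInter]; intro i; fin_cases i <;> assumption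
  rw [hI] at this; exact this

/-- build NotTWiseIntersecting 2 from a disjoint pair -/
lemma notT2_of_pair {F : Finset (Finset ℕ)} {B₁ B₂ : Finset ℕ} (h1 : B₁ ∈ F) (h2 : B₂ ∈ F)
    (hne : B₁ ≠ B₂) (hdisj : ∀ x, ¬(x ∈ B₁ ∧ x ∈ B₂)) : NotTWiseIntersecting 2 F := by
  refine ⟨![B₁, B₂], ?_, ?_, ?_⟩
  · intro i j hij
    fin_cases i <;> fin_cases j <;> simp_all
  · intro i; fin_cases i <;> simpa
  · rw [Set.eq_empty_iff_forall_notMem]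
    intro x hx
    rw [Set.mem_iInter] at hx
    exact hdisj x ⟨by simpa using hx 0, by simpa using hx 1⟩

/-- counting: sets of size k in range n containing two fixed distinct points -/
lemma count_two_points {n k : ℕ} {F : Finset (Finset ℕ)}
    (hF : F ⊆ Finset.powersetCard k (Finset.range n)) {x y : ℕ} (hxy : x ≠ y) :
    (F.filter (fun C => x ∈ C ∧ y ∈ C)).card ≤ n.choose (k-2) := by
  have : (F.filter (fun C => x ∈ C ∧ y ∈ C)).card
      ≤ (Finset.powersetCard (k-2) (Finset.range n)).card := by
    apply Finset.card_le_card_of_injOn (fun C => (C.erase x).erase y)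
    · intro C hC
      rw [Finset.mem_coe, Finset.mem_filter] at hC
      obtain ⟨hCF, hxC, hyC⟩ := hC
      obtain ⟨hCsub, hCcard⟩ := Finset.mem_powersetCard.mp (hF hCF)
      rw [Finset.mem_coe, Finset.mem_powersetCard]
      constructor
      · exact subset_trans (Finset.erase_subset _ _) (subset_trans (Finset.erase_subset _ _) hCsub)
      · rw [Finset.card_erase_of_mem (Finset.mem_erase.mpr ⟨hxy.symm, hyC⟩),
          Finset.card_erase_of_mem hxC, hCcard]
        omega
    · intro C₁ hC₁ C₂ hC₂ heq
      simp only [Finset.coe_filter, Set.mem_setOf_eq] at hC₁ hC₂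
      have key : ∀ C : Finset ℕ, x ∈ C → y ∈ C → insert x (insert y ((C.erase x).erase y)) = C := by
        intro C hx hy
        rw [Finset.insert_erase (Finset.mem_erase.mpr ⟨hxy.symm, hy⟩), Finset.insert_erase hx]
      rw [← key C₁ hC₁.2.1 hC₁.2.2, ← key C₂ hC₂.2.1 hC₂.2.2]
      exact congrArg (fun s => insert x (insert y s)) heq
  rwa [Finset.card_powersetCard, Finset.card_range] at this

/-- an intersecting family that is not t-wise intersecting is small -/
lemma intersecting_bound {n k t : ℕ} {F : Finset (Finset ℕ)} (hk : 3 ≤ k) (ht : 2 ≤ t)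
    (hF : F ⊆ Finset.powersetCard k (Finset.range n))
    (hnot2 : ¬ NotTWiseIntersecting 2 F) (hnott : NotTWiseIntersecting t F) :
    F.card ≤ k^2 * n.choose (k-2) := by
  obtain ⟨A, hinj, hmem, hempty⟩ := hnott
  have hcardA : ∀ i, (A i).card = k := fun i => (Finset.mem_powersetCard.mp (hF (hmem i))).2
  have hmeet : ∀ C ∈ F, ∀ j : Fin t, ∃ y ∈ A j, y ∈ C := by
    intro C hC j
    by_cases hCA : C = A j
    · have : (A j).Nonempty := Finset.card_pos.mp (by rw [hcardA j]; omega)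
      obtain ⟨y, hy⟩ := this
      exact ⟨y, hy, hCA ▸ hy⟩
    · by_contra hcon
      push_neg at hcon
      exact hnot2 (notT2_of_pair hC (hmem j) hCA (fun x ⟨hx1, hx2⟩ => hcon x hx2 hx1))
  have i0 : Fin t := ⟨0, by omega⟩
  have hsub : F ⊆ (A i0).biUnion (fun x => F.filter (fun C => x ∈ C)) := by
    intro C hC
    obtain ⟨y, hyA, hyC⟩ := hmeet C hC i0
    exact Finset.mem_biUnion.mpr ⟨y, hyA, Finset.mem_filter.mpr ⟨hC, hyC⟩⟩
  have hinner : ∀ x ∈ A i0, (F.filter (fun C => x ∈ C)).card ≤ k * n.choose (k-2) := by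
    intro x hx
    have hxj : ∃ j : Fin t, x ∉ A j := by
      by_contra hcon
      push_neg at hcon
      have : x ∈ ⋂ i, ((A i : Set ℕ)) := Set.mem_iInter.mpr (fun i => hcon i)
      rw [hempty] at this; exact this
    obtain ⟨j, hj⟩ := hxj
    have hsub2 : F.filter (fun C => x ∈ C)
        ⊆ (A j).biUnion (fun y => F.filter (fun C => x ∈ C ∧ y ∈ C)) := by
      intro C hC
      rw [Finset.mem_filter] at hC
      obtain ⟨y, hyA, hyC⟩ := hmeet C hC.1 j
      exact Finset.mem_biUnion.mpr ⟨y, hyA, Finset.mem_filter.mpr ⟨hC.1, hC.2, hyC⟩⟩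
    calc (F.filter (fun C => x ∈ C)).card
        ≤ ((A j).biUnion (fun y => F.filter (fun C => x ∈ C ∧ y ∈ C))).card :=
          Finset.card_le_card hsub2
      _ ≤ ∑ y ∈ A j, (F.filter (fun C => x ∈ C ∧ y ∈ C)).card := Finset.card_biUnion_le
      _ ≤ ∑ _y ∈ A j, n.choose (k-2) := by
          apply Finset.sum_le_sum
          intro y hy
          exact count_two_points hF (fun h => hj (h ▸ hy))
      _ = k * n.choose (k-2) := by rw [Finset.sum_const, hcardA, smul_eq_mul]
  calc F.card ≤ ((A i0).biUnion (fun x => F.filter (fun C => x ∈ C))).card :=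
        Finset.card_le_card hsub
    _ ≤ ∑ x ∈ A i0, (F.filter (fun C => x ∈ C)).card := Finset.card_biUnion_le
    _ ≤ ∑ _x ∈ A i0, k * n.choose (k-2) := Finset.sum_le_sum hinner
    _ = k * (k * n.choose (k-2)) := by rw [Finset.sum_const, hcardA, smul_eq_mul]
    _ = k^2 * n.choose (k-2) := by ring

/-- the construction: star-at-k avoiding range k, plus range k itself -/
lemma construction (n k d : ℕ) (hk : 3 ≤ k) (hd : 3 ≤ d) (hn : 4*k ≤ n) :
    ∃ G : Finset (Finset ℕ), G ⊆ Finset.powersetCard k (Finset.range n) ∧ ¬ HasCluster d k G ∧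
      (∃ B₁ B₂, B₁ ∈ G ∧ B₂ ∈ G ∧ B₁ ≠ B₂ ∧ ∀ x, ¬(x ∈ B₁ ∧ x ∈ B₂)) ∧
      (n-k-1).choose (k-1) + 1 ≤ G.card := by
  set K : Finset ℕ := Finset.range k with hK
  set Gf : Finset (Finset ℕ) := (Finset.powersetCard k (Finset.range n)).filter
    (fun A => k ∈ A ∧ ∀ x ∈ A, k ≤ x) with hGf
  set G : Finset (Finset ℕ) := insert K Gf with hG
  have hKpc : K ∈ Finset.powersetCard k (Finset.range n) := by
    rw [Finset.mem_powersetCard]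
    exact ⟨Finset.range_subset_range.mpr (by omega), Finset.card_range k⟩
  have hGsub : G ⊆ Finset.powersetCard k (Finset.range n) := by
    intro A hA
    rcases Finset.mem_insert.mp hA with rfl | hA
    · exact hKpc
    · exact (Finset.mem_filter.mp hA).1
  -- the disjoint pair
  set B : Finset ℕ := (Finset.range k).image (· + k) with hB
  have hBGf : B ∈ Gf := by
    rw [hGf, Finset.mem_filter, Finset.mem_powersetCard]
    refine ⟨⟨?_, ?_⟩, ?_, ?_⟩
    · intro x hx
      rw [hB, Finset.mem_image] at hx
      obtain ⟨a, ha, rfl⟩ := hx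
      rw [Finset.mem_range] at ha ⊢; omega
    · rw [hB, Finset.card_image_of_injective _ (add_left_injective k), Finset.card_range]
    · rw [hB, Finset.mem_image]; exact ⟨0, Finset.mem_range.mpr (by omega), by omega⟩
    · intro x hx
      rw [hB, Finset.mem_image] at hx
      obtain ⟨a, _, rfl⟩ := hx; omega
  have hKB : ∀ x, ¬(x ∈ K ∧ x ∈ B) := by
    intro x ⟨hx1, hx2⟩
    rw [hK, Finset.mem_range] at hx1
    rw [hB, Finset.mem_image] at hx2
    obtain ⟨a, _, rfl⟩ := hx2; omega
  have hKneB : K ≠ B := by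
    intro h
    have h0 : 0 ∈ K := by rw [hK, Finset.mem_range]; omega
    rw [h, hB, Finset.mem_image] at h0
    obtain ⟨a, _, ha⟩ := h0; omega
  have hKG : K ∈ G := Finset.mem_insert_self _ _
  have hBG : B ∈ G := Finset.mem_insert_of_mem hBGf
  -- cluster-free
  have hNC : ¬ HasCluster d k G := by
    rintro ⟨A, hinj, hmem, hcard, hempty⟩
    have hKmem : ∃ i0, A i0 = K := by
      by_contra h
      push_neg at h
      have hk_all : ∀ i, k ∈ A i := by
        intro i
        rcases Finset.mem_insert.mp (hmem i) with hi | hi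
        · exact absurd hi (h i)
        · exact (Finset.mem_filter.mp hi).2.1
      have : (k : ℕ) ∈ ⋂ i, ((A i : Set ℕ)) :=
        Set.mem_iInter.mpr (fun i => Finset.mem_coe.mpr (hk_all i))
      rw [hempty] at this; exact this
    obtain ⟨i0, hi0⟩ := hKmem
    have hex : ∃ a b : ℕ, a < d ∧ b < d ∧ a ≠ b ∧ a ≠ i0.val ∧ b ≠ i0.val := by
      by_cases h0 : i0.val = 0
      · exact ⟨1, 2, by omega, by omega, by omega, by omega, by omega⟩
      · by_cases h1 : i0.val = 1
        · exact ⟨0, 2, by omega, by omega, by omega, by omega, by omega⟩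
        · exact ⟨0, 1, by omega, by omega, by omega, by omega, by omega⟩
    obtain ⟨a, b, ha, hb, hab, hai, hbi⟩ := hex
    set i1 : Fin d := ⟨a, ha⟩
    set i2 : Fin d := ⟨b, hb⟩
    have h12 : i1 ≠ i2 := fun h => hab (congrArg Fin.val h)
    have h10 : i1 ≠ i0 := fun h => hai (congrArg Fin.val h)
    have h20 : i2 ≠ i0 := fun h => hbi (congrArg Fin.val h)
    have hGfmem : ∀ i : Fin d, i ≠ i0 → A i ∈ Gf := by
      intro i hi
      rcases Finset.mem_insert.mp (hmem i) with h | h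
      · exact absurd (hinj (h.trans hi0.symm)) hi
      · exact h
    have hm1 := Finset.mem_filter.mp (hGfmem i1 h10)
    have hm2 := Finset.mem_filter.mp (hGfmem i2 h20)
    have hc1 : (A i1).card = k := (Finset.mem_powersetCard.mp hm1.1).2
    have hc2 : (A i2).card = k := (Finset.mem_powersetCard.mp hm2.1).2
    have hA12 : A i1 ≠ A i2 := fun h => h12 (hinj h)
    have hdisj : Disjoint K (A i1 ∪ A i2) := by
      rw [Finset.disjoint_left]
      intro x hx hx2
      rw [hK, Finset.mem_range] at hx
      rcases Finset.mem_union.mp hx2 with h | h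
      · exact absurd (hm1.2.2 x h) (by omega)
      · exact absurd (hm2.2.2 x h) (by omega)
    have hsub : K ∪ (A i1 ∪ A i2) ⊆ Finset.univ.sup A := by
      apply Finset.union_subset
      · exact hi0 ▸ Finset.le_sup (Finset.mem_univ i0)
      · exact Finset.union_subset (Finset.le_sup (Finset.mem_univ i1))
          (Finset.le_sup (Finset.mem_univ i2))
    have hu : k + 1 ≤ (A i1 ∪ A i2).card := by
      by_contra hcon
      push_neg at hcon
      have h1 : A i1 = A i1 ∪ A i2 :=
        Finset.eq_of_subset_of_card_le Finset.subset_union_left (by rw [hc1]; omega)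
      have h2 : A i2 ⊆ A i1 := by
        rw [h1]; exact Finset.subset_union_right
      have h3 : A i2 = A i1 :=
        Finset.eq_of_subset_of_card_le h2 (by rw [hc1, hc2])
      exact hA12 h3.symm
    have hbig : 2*k + 1 ≤ (Finset.univ.sup A).card := by
      calc 2*k + 1 ≤ K.card + (A i1 ∪ A i2).card := by
            rw [hK, Finset.card_range]; omega
        _ = (K ∪ (A i1 ∪ A i2)).card := (Finset.card_union_of_disjoint hdisj).symm
        _ ≤ (Finset.univ.sup A).card := Finset.card_le_card hsub
    omega
  -- card lower bound
  have hKnotGf : K ∉ Gf := by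
    rw [hGf, Finset.mem_filter]
    rintro ⟨-, hkK, -⟩
    rw [hK, Finset.mem_range] at hkK; omega
  have hcardG : G.card = Gf.card + 1 := by
    rw [hG, Finset.card_insert_of_notMem hKnotGf]
  have hGfcard : (n-k-1).choose (k-1) ≤ Gf.card := by
    have hinj2 : (Finset.powersetCard (k-1) (Finset.Ico (k+1) n)).card ≤ Gf.card := by
      apply Finset.card_le_card_of_injOn (fun s => insert k s)
      · intro s hs
        obtain ⟨hssub, hscard⟩ := Finset.mem_powersetCard.mp hs
        have hks : k ∉ s := by
          intro h
          have := hssub h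
          rw [Finset.mem_Ico] at this; omega
        rw [hGf, Finset.mem_coe, Finset.mem_filter, Finset.mem_powersetCard]
        refine ⟨⟨?_, ?_⟩, ?_, ?_⟩
        · intro x hx
          rcases Finset.mem_insert.mp hx with rfl | hx
          · rw [Finset.mem_range]; omega
          · have := hssub hx; rw [Finset.mem_Ico] at this; rw [Finset.mem_range]; omega
        · rw [Finset.card_insert_of_notMem hks, hscard]; omega
        · exact Finset.mem_insert_self _ _
        · intro x hx
          rcases Finset.mem_insert.mp hx with rfl | hx
          · omega
          · have := hssub hx; rw [Finset.mem_Ico] at this; omega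
      · intro s₁ hs₁ s₂ hs₂ heq
        have hs₁' := Finset.mem_powersetCard.mp (Finset.mem_coe.mp hs₁)
        have hs₂' := Finset.mem_powersetCard.mp (Finset.mem_coe.mp hs₂)
        have hk1 : k ∉ s₁ := by
          intro h; have := hs₁'.1 h; rw [Finset.mem_Ico] at this; omega
        have hk2 : k ∉ s₂ := by
          intro h; have := hs₂'.1 h; rw [Finset.mem_Ico] at this; omega
        have : (insert k s₁).erase k = (insert k s₂).erase k :=
          congrArg (fun u => Finset.erase u k) heq
        rwa [Finset.erase_insert hk1, Finset.erase_insert hk2] at this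
    rwa [Finset.card_powersetCard, Nat.card_Ico, show n - (k+1) = n - k - 1 by omega] at hinj2
  exact ⟨G, hGsub, hNC, ⟨K, B, hKG, hBG, hKneB, hKB⟩, by omega⟩

lemma bddAbove_S (n k d t : ℕ) :
    BddAbove { s : ℕ | ∃ F : Finset (Finset ℕ), F ⊆ Finset.powersetCard k (Finset.range n) ∧
      ¬ HasCluster d k F ∧ NotTWiseIntersecting t F ∧ F.card = s } :=
  ⟨(Finset.powersetCard k (Finset.range n)).card, by
    rintro s ⟨F, hF, -, -, rfl⟩; exact Finset.card_le_card hF⟩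

theorem stmt10 (k d t : ℕ) (hd : 3 ≤ d) (hdk : d ≤ k) (ht : 2 ≤ t) :
    ∃ N : ℕ, ∀ n ≥ N, maxSize n k d t = maxSize n k d 2 := by
  have hk : 3 ≤ k := le_trans hd hdk
  refine ⟨2^(k-1)*(k-1).factorial*k^2 + t*(k-1).factorial + 4*k, fun n hn => ?_⟩
  obtain ⟨hC1, hC2⟩ := main_ineq k t n hk hn
  have hn4 : 4*k ≤ n := by
    have := Nat.zero_le (2^(k-1)*(k-1).factorial*k^2 + t*(k-1).factorial); omega
  obtain ⟨G, hGsub, hGnc, ⟨B₁, B₂, hB₁, hB₂, hBne, hBdisj⟩, hGcard⟩ := construction n k d hk hd hn4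
  have hG2 : NotTWiseIntersecting 2 G := notT2_of_pair hB₁ hB₂ hBne hBdisj
  have hGt : t ≤ G.card := le_trans hC2 (by omega)
  have hGtw : NotTWiseIntersecting t G := notT_of_pair hB₁ hB₂ hBne hBdisj ht hGt
  have hmem_t : maxSize n k d t ∈ { s : ℕ | ∃ F : Finset (Finset ℕ),
      F ⊆ Finset.powersetCard k (Finset.range n) ∧
      ¬ HasCluster d k F ∧ NotTWiseIntersecting t F ∧ F.card = s } :=
    Nat.sSup_mem ⟨G.card, G, hGsub, hGnc, hGtw, rfl⟩ (bddAbove_S n k d t)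
  have hmem_2 : maxSize n k d 2 ∈ { s : ℕ | ∃ F : Finset (Finset ℕ),
      F ⊆ Finset.powersetCard k (Finset.range n) ∧
      ¬ HasCluster d k F ∧ NotTWiseIntersecting 2 F ∧ F.card = s } :=
    Nat.sSup_mem ⟨G.card, G, hGsub, hGnc, hG2, rfl⟩ (bddAbove_S n k d 2)
  have hG_le_2 : G.card ≤ maxSize n k d 2 :=
    le_csSup (bddAbove_S n k d 2) ⟨G, hGsub, hGnc, hG2, rfl⟩
  apply le_antisymm
  · -- maxSize t ≤ maxSize 2
    obtain ⟨Ft, hsub, hnc, hnt, hcard⟩ := hmem_t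
    by_cases h2 : NotTWiseIntersecting 2 Ft
    · rw [← hcard]
      exact le_csSup (bddAbove_S n k d 2) ⟨Ft, hsub, hnc, h2, rfl⟩
    · have hb := intersecting_bound hk ht hsub h2 hnt
      rw [← hcard]
      calc Ft.card ≤ k^2 * n.choose (k-2) := hb
        _ ≤ (n-k-1).choose (k-1) := hC1
        _ ≤ G.card := by omega
        _ ≤ maxSize n k d 2 := hG_le_2
  · -- maxSize 2 ≤ maxSize t
    obtain ⟨F2, hsub2, hnc2, hn22, hcard2⟩ := hmem_2
    have hF2t : t ≤ F2.card := by
      rw [hcard2]; exact le_trans hGt hG_le_2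
    obtain ⟨C₁, C₂, hC₁, hC₂, hCne, hCdisj⟩ := pair_of_notT2 hn22
    have hF2tw : NotTWiseIntersecting t F2 := notT_of_pair hC₁ hC₂ hCne hCdisj ht hF2t
    rw [← hcard2]
    exact le_csSup (bddAbove_S n k d t) ⟨F2, hsub2, hnc2, hF2tw, rfl⟩
end

section
/- Let k ≥ d ≥ 3 and t ≥ 2 be fixed integers. For all sufficiently large n the following holds: if K ⊆ binom([n],k) is d-cluster-free, is not t-wise intersecting, and satisfies |K| ≥ C(n-k-1, k-1), then K is not intersecting, i.e., K contains two disjoint sets. -/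
open Finset

private lemma arith_aux (k : ℕ) (hk : 3 ≤ k) :
    ∃ N : ℕ, ∀ n ≥ N, k ^ 2 * Nat.choose n (k - 2) < Nat.choose (n - k - 1) (k - 1) := by
  refine ⟨2 ^ (k - 1) * (k ^ 2 * (k - 1).factorial) + 4 * k, fun n hn => ?_⟩
  have hn4 : 4 * k ≤ n := le_trans (Nat.le_add_left _ _) hn
  set p := n - (2 * k - 1) with hp
  have h2p : n ≤ 2 * p := by omega
  have hppos : 0 < n := by omega
  have hn' : 2 ^ (k - 1) * (k ^ 2 * (k - 1).factorial) < n :=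
    lt_of_lt_of_le (Nat.lt_add_of_pos_right (by omega)) hn
  have hsplit : n ^ (k - 1) = n ^ (k - 2) * n := by
    rw [← pow_succ]; congr 1; omega
  have h1 : n ^ (k - 1) ≤ 2 ^ (k - 1) * p ^ (k - 1) := by
    calc n ^ (k - 1) ≤ (2 * p) ^ (k - 1) := Nat.pow_le_pow_left h2p _
      _ = 2 ^ (k - 1) * p ^ (k - 1) := Nat.mul_pow 2 p (k - 1)
  have h2 : 2 ^ (k - 1) * (k ^ 2 * (k - 1).factorial * n ^ (k - 2)) < n ^ (k - 1) := by
    calc 2 ^ (k - 1) * (k ^ 2 * (k - 1).factorial * n ^ (k - 2))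
        = n ^ (k - 2) * (2 ^ (k - 1) * (k ^ 2 * (k - 1).factorial)) := by ring
      _ < n ^ (k - 2) * n := by
          exact Nat.mul_lt_mul_of_le_of_lt (le_refl _) hn' (pow_pos hppos _)
      _ = n ^ (k - 1) := hsplit.symm
  have key : k ^ 2 * (k - 1).factorial * n ^ (k - 2) < p ^ (k - 1) :=
    Nat.lt_of_mul_lt_mul_left (h2.trans_le h1)
  have hd1 : p ^ (k - 1) ≤ Nat.descFactorial (n - k - 1) (k - 1) := by
    have hpe : p = (n - k - 1) + 1 - (k - 1) := by omega
    rw [hpe]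
    exact Nat.pow_sub_le_descFactorial (n - k - 1) (k - 1)
  have hd2 : Nat.descFactorial (n - k - 1) (k - 1)
      = (k - 1).factorial * Nat.choose (n - k - 1) (k - 1) :=
    Nat.descFactorial_eq_factorial_mul_choose _ _
  have hfin : (k - 1).factorial * (k ^ 2 * Nat.choose n (k - 2))
      < (k - 1).factorial * Nat.choose (n - k - 1) (k - 1) := by
    calc (k - 1).factorial * (k ^ 2 * Nat.choose n (k - 2))
        = k ^ 2 * (k - 1).factorial * Nat.choose n (k - 2) := by ring
      _ ≤ k ^ 2 * (k - 1).factorial * n ^ (k - 2) :=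
          Nat.mul_le_mul_left _ (Nat.choose_le_pow n (k - 2))
      _ < p ^ (k - 1) := key
      _ ≤ Nat.descFactorial (n - k - 1) (k - 1) := hd1
      _ = (k - 1).factorial * Nat.choose (n - k - 1) (k - 1) := hd2
  exact Nat.lt_of_mul_lt_mul_left hfin

theorem stmt11 (k d t : ℕ) (hd : 3 ≤ d) (hdk : d ≤ k) (ht : 2 ≤ t) :
    ∃ N : ℕ, ∀ n ≥ N, ∀ K : Finset (Finset ℕ),
      K ⊆ Finset.powersetCard k (Finset.range n) →
      ¬ HasCluster d k K →
      NotTWiseIntersecting t K →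
      Nat.choose (n - k - 1) (k - 1) ≤ K.card →
      ∃ A ∈ K, ∃ B ∈ K, A ≠ B ∧ Disjoint A B := by
  classical
  have hk3 : 3 ≤ k := hd.trans hdk
  obtain ⟨N, hN⟩ := arith_aux k hk3
  refine ⟨N, fun n hn K hKsub _ hNTI hcard => ?_⟩
  by_contra hcon
  push_neg at hcon
  obtain ⟨A, hAinj, hAmem, hAint⟩ := hNTI
  have ht0 : 0 < t := by omega
  set A0 := A ⟨0, ht0⟩ with hA0
  have hA0K : A0 ∈ K := hAmem _
  have hcards : ∀ C ∈ K, C.card = k ∧ C ⊆ Finset.range n := fun C hC => by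
    have := hKsub hC; rw [Finset.mem_powersetCard] at this; exact ⟨this.2, this.1⟩
  have hA0card : A0.card = k := (hcards _ hA0K).1
  -- intersecting property
  have hint : ∀ C ∈ K, ∀ D ∈ K, D.Nonempty → ∃ x, x ∈ D ∧ x ∈ C := by
    intro C hC D hD hDne
    rcases eq_or_ne C D with rfl | hne
    · obtain ⟨x, hx⟩ := hDne; exact ⟨x, hx, hx⟩
    · exact Finset.not_disjoint_iff.mp (hcon D hD C hC hne.symm)
  -- witnesses for non-membership
  have hwit : ∀ a : ℕ, ∃ i : Fin t, a ∉ A i := by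
    intro a
    by_contra h
    push_neg at h
    have : a ∈ ⋂ i, (A i : Set ℕ) := Set.mem_iInter.mpr fun i => h i
    rw [hAint] at this; exact this
  choose ix hix using hwit
  set B : ℕ → Finset ℕ := fun a => A (ix a) with hB
  set S : ℕ → ℕ → Finset (Finset ℕ) := fun a b =>
    (Finset.powersetCard k (Finset.range n)).filter (fun C => a ∈ C ∧ b ∈ C) with hS
  have hcover : K ⊆ A0.biUnion fun a => (B a).biUnion fun b => S a b := by
    intro C hC
    have hA0ne : A0.Nonempty := by rw [← Finset.card_pos, hA0card]; omega
    obtain ⟨a, haA0, haC⟩ := hint C hC A0 hA0K hA0ne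
    have hBaK : B a ∈ K := hAmem _
    have hBane : (B a).Nonempty := by
      rw [← Finset.card_pos, (hcards _ hBaK).1]; omega
    obtain ⟨b, hbBa, hbC⟩ := hint C hC (B a) hBaK hBane
    refine Finset.mem_biUnion.mpr ⟨a, haA0, Finset.mem_biUnion.mpr ⟨b, hbBa, ?_⟩⟩
    exact Finset.mem_filter.mpr ⟨hKsub hC, haC, hbC⟩
  have hScard : ∀ a b : ℕ, a ≠ b → (S a b).card ≤ Nat.choose n (k - 2) := by
    intro a b hab
    have hle : (S a b).card ≤ (Finset.powersetCard (k - 2) (Finset.range n)).card := by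
      apply Finset.card_le_card_of_injOn (fun C => (C.erase a).erase b)
      · intro C hC
        simp only [hS, Finset.mem_coe, Finset.mem_filter, Finset.mem_powersetCard] at hC
        obtain ⟨⟨hsub, hcardC⟩, haC, hbC⟩ := hC
        rw [Finset.mem_coe, Finset.mem_powersetCard]
        refine ⟨(Finset.erase_subset _ _).trans ((Finset.erase_subset _ _).trans hsub), ?_⟩
        rw [Finset.card_erase_of_mem (Finset.mem_erase.mpr ⟨hab.symm, hbC⟩),
          Finset.card_erase_of_mem haC, hcardC]
        omega
      · intro C1 h1 C2 h2 heq
        simp only [hS, Finset.mem_coe, Finset.mem_filter] at h1 h2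
        have e1 : ∀ C : Finset ℕ, a ∈ C → b ∈ C →
            insert a (insert b ((C.erase a).erase b)) = C := by
          intro C haC hbC
          rw [Finset.insert_erase (Finset.mem_erase.mpr ⟨hab.symm, hbC⟩),
            Finset.insert_erase haC]
        have heq' : (C1.erase a).erase b = (C2.erase a).erase b := heq
        rw [← e1 C1 h1.2.1 h1.2.2, ← e1 C2 h2.2.1 h2.2.2, heq']
    rwa [Finset.card_powersetCard, Finset.card_range] at hle
  have htotal : K.card ≤ k * (k * Nat.choose n (k - 2)) := by
    calc K.card ≤ (A0.biUnion fun a => (B a).biUnion fun b => S a b).card :=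
          Finset.card_le_card hcover
      _ ≤ ∑ a ∈ A0, ((B a).biUnion fun b => S a b).card := Finset.card_biUnion_le
      _ ≤ ∑ _a ∈ A0, (k * Nat.choose n (k - 2)) := by
          apply Finset.sum_le_sum
          intro a _
          calc ((B a).biUnion fun b => S a b).card ≤ ∑ b ∈ B a, (S a b).card :=
                Finset.card_biUnion_le
            _ ≤ ∑ _b ∈ B a, Nat.choose n (k - 2) := by
                apply Finset.sum_le_sum
                intro b hb
                refine hScard a b ?_
                rintro rfl
                exact hix a hb
            _ = (B a).card * Nat.choose n (k - 2) := by rw [Finset.sum_const, smul_eq_mul]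
            _ = k * Nat.choose n (k - 2) := by rw [(hcards _ (hAmem _)).1]
      _ = A0.card * (k * Nat.choose n (k - 2)) := by rw [Finset.sum_const, smul_eq_mul]
      _ = k * (k * Nat.choose n (k - 2)) := by rw [hA0card]
  have hlt := hN n hn
  have hsq : k * (k * Nat.choose n (k - 2)) = k ^ 2 * Nat.choose n (k - 2) := by ring
  rw [hsq] at htotal
  exact absurd hcard (not_le.mpr (lt_of_le_of_lt htotal hlt))
end

section
/- Fix an integer k ≥ 3 and a constant c > 0. For all sufficiently large n the following holds: let F ⊆ binom([n],k), let x ∈ [n], and set m = |{F ∈ F : x ∉ F}|. If |F| ≥ C(n-k-1, k-1) and m ≥ c·C(n-1, k-2), then there exist three pairwise disjoint (k-2)-element sets S_1, S_2, S_3 ⊆ [n] \ {x} such that for each i ∈ {1,2,3}, |{y ∈ [n] : {x,y} ∪ S_i ∈ F}| ≥ n - k + 1 - (k²/c + 2k)·m / C(n-1, k-2). -/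
open Finset


lemma choose_sub_le (a r d : ℕ) : a.choose (r+1) ≤ (a - d).choose (r+1) + d * a.choose r := by
  induction d with
  | zero => simp
  | succ d ih =>
    refine ih.trans ?_
    have h : (a - d).choose (r+1) ≤ (a - (d+1)).choose (r+1) + a.choose r := by
      rcases Nat.eq_zero_or_pos (a - d) with h0 | h0
      · have : a - (d+1) = 0 := by omega
        simp [h0, this]
      · obtain ⟨b, hb⟩ : ∃ b, a - d = b + 1 := ⟨a - d - 1, by omega⟩
        have hb2 : a - (d+1) = b := by omega
        rw [hb, hb2, Nat.choose_succ_succ]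
        have : b.choose r ≤ a.choose r := Nat.choose_le_choose r (by omega)
        simp only [Nat.succ_eq_add_one]
        omega
    calc (a-d).choose (r+1) + d * a.choose r
        ≤ ((a - (d+1)).choose (r+1) + a.choose r) + d * a.choose r := by omega
      _ = (a - (d+1)).choose (r+1) + (d+1) * a.choose r := by ring

lemma card_filter_mem_le (A : Finset ℕ) (r : ℕ) (G : Finset (Finset ℕ))
    (h : ∀ g ∈ G, g ⊆ A ∧ g.card = r) (w : ℕ) :
    (G.filter (fun g => w ∈ g)).card ≤ (A.card - 1).choose (r-1) := by
  rcases (G.filter (fun g => w ∈ g)).eq_empty_or_nonempty with he | ⟨g0, hg0⟩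
  · simp [he]
  · simp only [mem_filter] at hg0
    have hwA : w ∈ A := (h g0 hg0.1).1 hg0.2
    have : (G.filter (fun g => w ∈ g)).card ≤ (powersetCard (r-1) (A.erase w)).card := by
      apply Finset.card_le_card_of_injOn (fun g => g.erase w)
      · intro g hg
        simp only [mem_coe, mem_filter] at hg
        obtain ⟨hsub, hcard⟩ := h g hg.1
        rw [mem_coe, mem_powersetCard]
        exact ⟨fun y hy => mem_erase.2 ⟨(mem_erase.1 hy).1, hsub (mem_erase.1 hy).2⟩,
          by rw [card_erase_of_mem hg.2, hcard]⟩
      · intro g1 h1 g2 h2 heq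
        simp only [coe_filter, Set.mem_setOf_eq] at h1 h2
        have he : g1.erase w = g2.erase w := heq
        rw [← Finset.insert_erase h1.2, ← Finset.insert_erase h2.2, he]
    rwa [card_powersetCard, card_erase_of_mem hwA] at this

lemma card_filter_meet_le (A : Finset ℕ) (r : ℕ) (G : Finset (Finset ℕ))
    (h : ∀ g ∈ G, g ⊆ A ∧ g.card = r) (W : Finset ℕ) :
    (G.filter (fun g => ¬ Disjoint W g)).card ≤ W.card * (A.card - 1).choose (r-1) := by
  have hsub : G.filter (fun g => ¬ Disjoint W g) ⊆ W.biUnion (fun w => G.filter (fun g => w ∈ g)) := by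
    intro g hg
    simp only [mem_filter] at hg
    obtain ⟨w, hwW, hwg⟩ := Finset.not_disjoint_iff.1 hg.2
    exact mem_biUnion.2 ⟨w, hwW, mem_filter.2 ⟨hg.1, hwg⟩⟩
  calc (G.filter (fun g => ¬ Disjoint W g)).card ≤ _ := card_le_card hsub
    _ ≤ ∑ w ∈ W, (G.filter (fun g => w ∈ g)).card := card_biUnion_le
    _ ≤ ∑ w ∈ W, (A.card - 1).choose (r-1) := Finset.sum_le_sum (fun w _ => card_filter_mem_le A r G h w)
    _ = W.card * (A.card - 1).choose (r-1) := by rw [Finset.sum_const, smul_eq_mul]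

lemma match3 (A : Finset ℕ) (r : ℕ) (G : Finset (Finset ℕ))
    (h : ∀ g ∈ G, g ⊆ A ∧ g.card = r)
    (hcard : 2 * r * (A.card - 1).choose (r-1) + 2 < G.card) :
    ∃ g1 ∈ G, ∃ g2 ∈ G, ∃ g3 ∈ G, Disjoint g1 g2 ∧ Disjoint g1 g3 ∧ Disjoint g2 g3 := by
  obtain ⟨g1, hg1⟩ := Finset.card_pos.1 (Nat.lt_of_le_of_lt (Nat.zero_le _) hcard)
  set G1 := G.filter (fun g => Disjoint g1 g) with hG1
  have hsplit : G1.card + (G.filter (fun g => ¬ Disjoint g1 g)).card = G.card :=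
    Finset.card_filter_add_card_filter_not (s := G) (p := fun g => Disjoint g1 g)
  have h1 : (G.filter (fun g => ¬ Disjoint g1 g)).card ≤ r * (A.card - 1).choose (r-1) := by
    have := card_filter_meet_le A r G h g1
    rwa [(h g1 hg1).2] at this
  have h2r : 2 * r * (A.card - 1).choose (r-1) = r * (A.card - 1).choose (r-1) + r * (A.card - 1).choose (r-1) := by ring
  have hG1card : r * (A.card - 1).choose (r-1) + 2 < G1.card := by omega
  obtain ⟨g2, hg2⟩ := Finset.card_pos.1 (show 0 < G1.card by omega)
  set G2 := G1.filter (fun g => Disjoint g2 g) with hG2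
  have hsplit2 : G2.card + (G1.filter (fun g => ¬ Disjoint g2 g)).card = G1.card :=
    Finset.card_filter_add_card_filter_not (s := G1) (p := fun g => Disjoint g2 g)
  have h2 : (G1.filter (fun g => ¬ Disjoint g2 g)).card ≤ r * (A.card - 1).choose (r-1) := by
    calc (G1.filter (fun g => ¬ Disjoint g2 g)).card
        ≤ (G.filter (fun g => ¬ Disjoint g2 g)).card :=
          card_le_card (Finset.filter_subset_filter _ (Finset.filter_subset _ _))
      _ ≤ r * (A.card - 1).choose (r-1) := by
          have := card_filter_meet_le A r G h g2
          rwa [(h g2 (Finset.filter_subset _ _ hg2)).2] at this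
  have hG2card : 0 < G2.card := by omega
  obtain ⟨g3, hg3⟩ := Finset.card_pos.1 hG2card
  have hg3' := Finset.mem_filter.1 hg3
  have hg2' := Finset.mem_filter.1 hg2
  have hg3'' := Finset.mem_filter.1 hg3'.1
  exact ⟨g1, hg1, g2, hg2'.1, g3, hg3''.1, hg2'.2, hg3''.2, hg3'.2⟩

lemma sum_deg (n k x : ℕ) (hk : 3 ≤ k) (hx : x ∈ range n) (F : Finset (Finset ℕ))
    (hF : F ⊆ powersetCard k (range n)) :
    ∑ S ∈ powersetCard (k-2) ((range n).erase x),
        ((range n).filter (fun y => insert x (insert y S) ∈ F)).card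
      = (k-1) * (F.filter (fun A => x ∈ A)).card := by
  classical
  set 𝒮 := powersetCard (k-2) ((range n).erase x) with h𝒮
  set Fx := F.filter (fun A => x ∈ A) with hFx
  have hcardk : ∀ G ∈ F, G ⊆ range n ∧ G.card = k := by
    intro G hG
    have := hF hG
    rw [mem_powersetCard] at this
    exact this
  -- key facts about pairs in the sigma set
  have hpair : ∀ S ∈ 𝒮, ∀ y ∈ range n, insert x (insert y S) ∈ F →
      y ∉ S ∧ y ≠ x ∧ x ∉ S := by
    intro S hS y hy hmem
    rw [h𝒮, mem_powersetCard] at hS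
    have hxS : x ∉ S := fun hc => (Finset.mem_erase.1 (hS.1 hc)).1 rfl
    have hGk := (hcardk _ hmem).2
    constructor
    · intro hyS
      rw [Finset.insert_eq_self.2 hyS] at hGk
      have : (insert x S).card ≤ S.card + 1 := Finset.card_insert_le _ _
      omega
    constructor
    · intro hyx
      subst hyx
      rw [Finset.insert_idem] at hGk
      have : (insert y S).card ≤ S.card + 1 := Finset.card_insert_le _ _
      omega
    · exact hxS
  have hsig : ∑ S ∈ 𝒮, ((range n).filter (fun y => insert x (insert y S) ∈ F)).card
      = (𝒮.sigma (fun S => (range n).filter (fun y => insert x (insert y S) ∈ F))).card := by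
    rw [Finset.card_sigma]
  rw [hsig]
  rw [Finset.card_eq_sum_card_fiberwise
    (f := fun p : Σ _ : Finset ℕ, ℕ => insert x (insert p.2 p.1)) (t := Fx) ?_]
  · have hfib : ∀ G ∈ Fx,
        ((𝒮.sigma (fun S => (range n).filter (fun y => insert x (insert y S) ∈ F))).filter
          (fun p => insert x (insert p.2 p.1) = G)).card = k - 1 := by
      intro G hG
      rw [hFx, mem_filter] at hG
      obtain ⟨hGF, hxG⟩ := hG
      obtain ⟨hGsub, hGk⟩ := hcardk G hGF
      have : ((𝒮.sigma (fun S => (range n).filter (fun y => insert x (insert y S) ∈ F))).filter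
          (fun p => insert x (insert p.2 p.1) = G)).card = (G.erase x).card := by
        refine Finset.card_bij' (fun p _ => p.2) (fun y _ => ⟨(G.erase x).erase y, y⟩) ?_ ?_ ?_ ?_
        · -- forward maps into G.erase x
          intro p hp
          show p.2 ∈ G.erase x
          rw [Finset.mem_filter, Finset.mem_sigma, Finset.mem_filter] at hp
          obtain ⟨⟨hS, hy, hmem⟩, heq⟩ := hp
          obtain ⟨hynS, hynx, _⟩ := hpair _ hS _ hy hmem
          rw [Finset.mem_erase]
          refine ⟨hynx, ?_⟩
          rw [← heq]
          exact Finset.mem_insert_of_mem (Finset.mem_insert_self _ _)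
        · -- backward maps into fiber
          intro y hy
          rw [Finset.mem_erase] at hy
          obtain ⟨hynx, hyG⟩ := hy
          have hins : insert x (insert y ((G.erase x).erase y)) = G := by
            rw [Finset.insert_erase (Finset.mem_erase.2 ⟨hynx, hyG⟩), Finset.insert_erase hxG]
          show (⟨(G.erase x).erase y, y⟩ : Σ _ : Finset ℕ, ℕ) ∈ _
          rw [Finset.mem_filter, Finset.mem_sigma, Finset.mem_filter]
          refine ⟨⟨?_, ?_, ?_⟩, hins⟩
          · rw [h𝒮, mem_powersetCard]
            constructor
            · intro v hv
              rw [Finset.mem_erase] at hv ⊢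
              exact ⟨(Finset.mem_erase.1 hv.2).1, hGsub (Finset.mem_erase.1 hv.2).2⟩
            · rw [Finset.card_erase_of_mem (Finset.mem_erase.2 ⟨hynx, hyG⟩),
                Finset.card_erase_of_mem hxG, hGk]
              omega
          · show y ∈ range n
            exact hGsub hyG
          · show insert x (insert y ((G.erase x).erase y)) ∈ F
            rw [hins]; exact hGF
        · -- left inverse
          rintro ⟨S, y⟩ hp
          rw [Finset.mem_filter, Finset.mem_sigma, Finset.mem_filter] at hp
          obtain ⟨⟨hS, hy, hmem⟩, heq⟩ := hp
          obtain ⟨hynS, hynx, hxnS⟩ := hpair _ hS _ hy hmem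
          have h1 : (G.erase x).erase y = S := by
            have heq' : insert x (insert y S) = G := heq
            have hynS' : y ∉ S := hynS
            have hynx' : y ≠ x := hynx
            rw [← heq']
            rw [Finset.erase_insert (by
              rw [Finset.mem_insert]; push_neg
              exact ⟨Ne.symm hynx', hxnS⟩), Finset.erase_insert hynS']
          show (⟨(G.erase x).erase y, y⟩ : Σ _ : Finset ℕ, ℕ) = ⟨S, y⟩
          rw [h1]
        · intro y hy; rfl
      rw [this, Finset.card_erase_of_mem hxG, hGk]
    rw [Finset.sum_congr rfl hfib, Finset.sum_const, smul_eq_mul, mul_comm]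
  · intro p hp
    rw [Finset.mem_coe, Finset.mem_sigma, Finset.mem_filter] at hp
    rw [Finset.mem_coe, hFx, Finset.mem_filter]
    exact ⟨hp.2.2, Finset.mem_insert_self _ _⟩


set_option maxHeartbeats 1600000 in
theorem stmt15 (k : ℕ) (hk : 3 ≤ k) (c : ℝ) (hc : 0 < c) :
    ∃ N : ℕ, ∀ n ≥ N, ∀ F : Finset (Finset ℕ),
      F ⊆ Finset.powersetCard k (Finset.range n) →
      ∀ x ∈ Finset.range n,
        Nat.choose (n - k - 1) (k - 1) ≤ F.card →
        c * (Nat.choose (n - 1) (k - 2) : ℝ) ≤ ((F.filter fun A => x ∉ A).card : ℝ) →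
        ∃ S : Fin 3 → Finset ℕ,
          Pairwise (Function.onFun Disjoint S) ∧
          (∀ i, S i ⊆ Finset.range n \ {x} ∧ (S i).card = k - 2) ∧
          ∀ i, (n : ℝ) - k + 1 -
              ((k : ℝ) ^ 2 / c + 2 * k) * ((F.filter fun A => x ∉ A).card : ℝ) /
                (Nat.choose (n - 1) (k - 2) : ℝ) ≤
            (((Finset.range n).filter fun y => insert x (insert y (S i)) ∈ F).card : ℝ) := by
  refine ⟨3*k + 5 + ⌈((k:ℝ)-2)*(2*(k:ℝ)-2)*((k:ℝ)+2*c)/c⌉₊, ?_⟩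
  intro n hn F hF x hx hF1 hF2
  have hkn : 3*k + 5 ≤ n := le_trans (Nat.le_add_right _ _) hn
  set Ag := (range n).erase x with hAg
  have hAgcard : Ag.card = n - 1 := by rw [hAg, card_erase_of_mem hx, card_range]
  set 𝒮 := powersetCard (k-2) Ag with h𝒮
  have h𝒮card : 𝒮.card = (n-1).choose (k-2) := by rw [h𝒮, card_powersetCard, hAgcard]
  set m := (F.filter (fun A => x ∉ A)).card with hm
  set Fx := F.filter (fun A => x ∈ A) with hFx
  have hsplitF : Fx.card + m = F.card :=
    card_filter_add_card_filter_not (p := fun A => x ∈ A)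
  have hsum := sum_deg n k x hk hx F hF
  have hcardk : ∀ G ∈ F, G ⊆ range n ∧ G.card = k := by
    intro G hG
    have := hF hG
    rwa [mem_powersetCard] at this
  -- degree upper bound
  have hdegle : ∀ S ∈ 𝒮, ((range n).filter (fun y => insert x (insert y S) ∈ F)).card ≤ n - (k-1) := by
    intro S hS
    rw [h𝒮, mem_powersetCard] at hS
    obtain ⟨hSsub, hScard⟩ := hS
    have hxS : x ∉ S := fun hc => (Finset.mem_erase.1 (hSsub hc)).1 rfl
    have hsub : (range n).filter (fun y => insert x (insert y S) ∈ F) ⊆ range n \ insert x S := by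
      intro y hy
      rw [mem_filter] at hy
      obtain ⟨hyn, hymem⟩ := hy
      rw [mem_sdiff]
      refine ⟨hyn, ?_⟩
      rw [mem_insert]
      push_neg
      have hGk := (hcardk _ hymem).2
      constructor
      · intro hyx
        subst hyx
        rw [Finset.insert_idem] at hGk
        have := Finset.card_insert_le y S
        omega
      · intro hyS
        rw [Finset.insert_eq_self.2 hyS] at hGk
        have := Finset.card_insert_le x S
        omega
    have h1 : (insert x S).card = k - 1 := by
      rw [Finset.card_insert_of_notMem hxS, hScard]; omega
    have h2 : insert x S ⊆ range n := by
      intro v hv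
      rw [mem_insert] at hv
      rcases hv with rfl | hv
      · exact hx
      · exact (Finset.mem_erase.1 (hSsub hv)).2
    calc ((range n).filter (fun y => insert x (insert y S) ∈ F)).card
        ≤ (range n \ insert x S).card := card_le_card hsub
      _ = n - (k-1) := by rw [card_sdiff_of_subset h2, card_range, h1]
  -- real setup
  set C : ℝ := ((n-1).choose (k-2) : ℝ) with hC
  have hCpos : 0 < C := by
    rw [hC]
    exact_mod_cast Nat.choose_pos (by omega : k - 2 ≤ n - 1)
  set q : ℝ := (k:ℝ)^2/c + 2*k with hq
  have hqpos : 0 < q := by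
    rw [hq]
    have : (0:ℝ) < k := by exact_mod_cast (by omega : 0 < k)
    positivity
  have hmlow : c * C ≤ (m:ℝ) := hF2
  have hmpos : 0 < (m:ℝ) := lt_of_lt_of_le (by positivity) hmlow
  set t : ℝ := q * (m:ℝ) / C with ht
  have htpos : 0 < t := by rw [ht]; positivity
  set deg := fun S => ((range n).filter (fun y => insert x (insert y S) ∈ F)).card with hdeg
  set Good := 𝒮.filter (fun S => (n:ℝ) - k + 1 - t ≤ (deg S : ℝ)) with hGood
  set Bad := 𝒮.filter (fun S => ¬ ((n:ℝ) - k + 1 - t ≤ (deg S : ℝ))) with hBad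
  have hGB : Good.card + Bad.card = 𝒮.card :=
    card_filter_add_card_filter_not (p := fun S => (n:ℝ) - k + 1 - t ≤ (deg S : ℝ))
  have hcast1 : ((n - (k-1) : ℕ) : ℝ) = (n:ℝ) - k + 1 := by
    have h1 : k - 1 ≤ n := by omega
    have h2 : 1 ≤ k := by omega
    push_cast [h1, h2]
    ring
  have hdegleR : ∀ S ∈ 𝒮, (deg S : ℝ) ≤ (n:ℝ) - k + 1 := by
    intro S hS
    rw [← hcast1]
    exact_mod_cast hdegle S hS
  -- Markov
  have hsum' : ∑ S ∈ 𝒮, deg S = (k-1) * Fx.card := hsum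
  have hmarkov : t * Bad.card ≤ C * ((n:ℝ) - k + 1) - ((k:ℝ)-1) * Fx.card := by
    have h1 : t * (Bad.card:ℝ) = ∑ _S ∈ Bad, t := by
      rw [Finset.sum_const, nsmul_eq_mul]; ring
    have h2 : ∑ _S ∈ Bad, t ≤ ∑ S ∈ Bad, ((n:ℝ) - k + 1 - deg S) := by
      apply Finset.sum_le_sum
      intro S hS
      have hS2 := (Finset.mem_filter.1 hS).2
      rw [not_le] at hS2
      linarith
    have h3 : ∑ S ∈ Bad, ((n:ℝ) - k + 1 - deg S) ≤ ∑ S ∈ 𝒮, ((n:ℝ) - k + 1 - deg S) := by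
      apply Finset.sum_le_sum_of_subset_of_nonneg (Finset.filter_subset _ _)
      intro S hS _
      linarith [hdegleR S hS]
    have h4 : ∑ S ∈ 𝒮, ((n:ℝ) - k + 1 - deg S) = C * ((n:ℝ)-k+1) - ((k:ℝ)-1) * Fx.card := by
      rw [Finset.sum_sub_distrib, Finset.sum_const, nsmul_eq_mul]
      have hc1 : ((𝒮.card : ℕ) : ℝ) = C := by rw [h𝒮card, hC]
      have hc2 : ∑ S ∈ 𝒮, ((deg S : ℕ) : ℝ) = ((k:ℝ)-1) * (Fx.card : ℝ) := by
        rw [← Nat.cast_sum]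
        rw [hsum']
        push_cast [Nat.cast_sub (show 1 ≤ k by omega)]
        ring
      rw [hc1, hc2]
    linarith
  have hFxlow : ((n-k-1).choose (k-1) : ℝ) - (m:ℝ) ≤ (Fx.card : ℝ) := by
    have h1 : (((n-k-1).choose (k-1) : ℕ) : ℝ) ≤ (F.card : ℝ) := by exact_mod_cast hF1
    have h2 : (Fx.card : ℝ) + (m:ℝ) = (F.card : ℝ) := by exact_mod_cast hsplitF
    linarith
  have hident : C * ((n:ℝ)-k+1) = ((k:ℝ)-1) * ((n-1).choose (k-1) : ℝ) := by
    have e1 : k - 3 + 1 = k - 2 := by omega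
    have := Nat.choose_succ_right_eq (n-1) (k-2)
    have e2 : k - 2 + 1 = k - 1 := by omega
    rw [e2] at this
    have e3 : n - 1 - (k-2) = n - k + 1 := by omega
    rw [e3] at this
    -- this : (n-1).choose (k-1) * (k-1) = (n-1).choose (k-2) * (n-k+1)
    have hcast := congrArg (Nat.cast : ℕ → ℝ) this
    push_cast [Nat.cast_sub (show 1 ≤ k by omega), Nat.cast_sub (show k ≤ n by omega)] at hcast
    rw [hC]
    linarith
  have htele : ((n-1).choose (k-1) : ℝ) ≤ ((n-k-1).choose (k-1) : ℝ) + (k:ℝ) * C := by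
    have h := choose_sub_le (n-1) (k-2) k
    have e1 : k - 2 + 1 = k - 1 := by omega
    rw [e1] at h
    have e2 : n - 1 - k = n - k - 1 := by omega
    rw [e2] at h
    rw [hC]
    exact_mod_cast h
  have hBadle : t * (Bad.card:ℝ) ≤ ((k:ℝ)^2/c + (k:ℝ)) * (m:ℝ) := by
    have hk3 : (3:ℝ) ≤ (k:ℝ) := by exact_mod_cast hk
    have hCm : c * C ≤ (m:ℝ) := hmlow
    have hkpos : (0:ℝ) < (k:ℝ) := by linarith
    have hstep1 : t * (Bad.card:ℝ) ≤ ((k:ℝ)-1) * (k:ℝ) * C + ((k:ℝ)-1) * (m:ℝ) := by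
      have e1 := mul_le_mul_of_nonneg_left hFxlow (by linarith : (0:ℝ) ≤ (k:ℝ)-1)
      have e2 := mul_le_mul_of_nonneg_left htele (by linarith : (0:ℝ) ≤ (k:ℝ)-1)
      linarith [hmarkov, hident, e1, e2]
    have hstep2 : (k:ℝ)^2 * C ≤ ((k:ℝ)^2/c) * (m:ℝ) := by
      have e3 := mul_le_mul_of_nonneg_left hCm (le_of_lt (show (0:ℝ) < (k:ℝ)^2/c by positivity))
      have e4 : ((k:ℝ)^2/c) * (c * C) = (k:ℝ)^2 * C := by field_simp
      linarith [e3, e4.symm.le, e4.le]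
    linarith [hstep1, hstep2, hmpos, mul_pos hkpos hCpos]
  have hGoodlow : C * (k:ℝ) / q ≤ (Good.card : ℝ) := by
    have hGRnat : Good.card + Bad.card = (n-1).choose (k-2) := by rw [hGB, h𝒮card]
    have hGR : (Good.card:ℝ) + (Bad.card:ℝ) = C := by
      rw [hC]; exact_mod_cast hGRnat
    have hqB : q * (Bad.card:ℝ) ≤ ((k:ℝ)^2/c + k) * C := by
      have h3 := mul_le_mul_of_nonneg_right hBadle (le_of_lt hCpos)
      have h4 : t * (Bad.card:ℝ) * C = q * (Bad.card:ℝ) * (m:ℝ) := by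
        rw [ht]; field_simp
      rw [h4] at h3
      have h5 : (q * (Bad.card:ℝ)) * (m:ℝ) ≤ (((k:ℝ)^2/c + k) * C) * (m:ℝ) := by linarith
      exact le_of_mul_le_mul_right h5 hmpos
    rw [div_le_iff₀ hqpos]
    have h5 : (Good.card:ℝ) = C - (Bad.card:ℝ) := by linarith
    calc C * (k:ℝ) = C * q - ((k:ℝ)^2/c + k) * C := by rw [hq]; ring
      _ ≤ C * q - q * (Bad.card:ℝ) := by linarith
      _ = (C - (Bad.card:ℝ)) * q := by ring
      _ = (Good.card:ℝ) * q := by rw [h5]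
  -- find three disjoint good sets
  have hGoodsub : ∀ g ∈ Good, g ⊆ Ag ∧ g.card = k - 2 := by
    intro g hg
    have := (Finset.mem_filter.1 hg).1
    rw [h𝒮, mem_powersetCard] at this
    exact this
  have hkey : 2*(k-2) * (Ag.card - 1).choose (k-2-1) + 2 < Good.card := by
    have e : Ag.card - 1 = n - 2 := by rw [hAgcard]; omega
    have e2 : k - 2 - 1 = k - 3 := by omega
    rw [e, e2]
    have hk3 : (3:ℝ) ≤ (k:ℝ) := by exact_mod_cast hk
    have hkpos : (0:ℝ) < (k:ℝ) := by linarith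
    have hDnat : 0 < (n-1).choose (k-3) := Nat.choose_pos (by omega)
    have hD1 : (1:ℝ) ≤ ((n-1).choose (k-3) : ℝ) := by exact_mod_cast hDnat
    have hch : ((n-2).choose (k-3) : ℝ) ≤ ((n-1).choose (k-3) : ℝ) := by
      exact_mod_cast Nat.choose_le_choose _ (by omega : n-2 ≤ n-1)
    have hid := Nat.choose_succ_right_eq (n-1) (k-3)
    rw [(by omega : k-3+1 = k-2), (by omega : n-1-(k-3) = n-k+2)] at hid
    have hidR : C * ((k:ℝ)-2) = ((n:ℝ)-k+2) * ((n-1).choose (k-3) : ℝ) := by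
      have hcast := congrArg (Nat.cast : ℕ → ℝ) hid
      push_cast [Nat.cast_sub (show 2 ≤ k by omega), Nat.cast_sub (show k ≤ n by omega)] at hcast
      rw [hC]
      linarith
    have hu : ((k:ℝ)-2)*(2*(k:ℝ)-2)*((k:ℝ)+2*c)/c < (n:ℝ) - k + 2 := by
      have hceil := Nat.le_ceil (((k:ℝ)-2)*(2*(k:ℝ)-2)*((k:ℝ)+2*c)/c)
      have h2 : (3*k + 5 + ⌈((k:ℝ)-2)*(2*(k:ℝ)-2)*((k:ℝ)+2*c)/c⌉₊ : ℝ) ≤ (n:ℝ) := by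
        exact_mod_cast hn
      push_cast at h2
      linarith
    have hqu : q * (((k:ℝ)-2) * (2*(k:ℝ)-2)) = (k:ℝ) * (((k:ℝ)-2)*(2*(k:ℝ)-2)*((k:ℝ)+2*c)/c) := by
      rw [hq]; field_simp
    -- real strict inequality
    have hreal : ((2*(k-2) * (n-2).choose (k-3) + 2 : ℕ) : ℝ) < (Good.card : ℝ) := by
      refine lt_of_lt_of_le ?_ hGoodlow
      push_cast [Nat.cast_sub (show 2 ≤ k by omega)]
      rw [lt_div_iff₀ hqpos]
      have hk2pos : (0:ℝ) < (k:ℝ) - 2 := by linarith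
      refine lt_of_mul_lt_mul_right ?_ (le_of_lt hk2pos)
      have step1 : ((2*((k:ℝ)-2) * ((n-2).choose (k-3):ℝ) + 2) * q) * ((k:ℝ)-2)
          ≤ ((2*(k:ℝ)-2) * ((n-1).choose (k-3):ℝ)) * q * ((k:ℝ)-2) := by
        have hbase : 2*((k:ℝ)-2) * ((n-2).choose (k-3):ℝ) + 2 ≤ (2*(k:ℝ)-2) * ((n-1).choose (k-3):ℝ) := by
          have := mul_le_mul_of_nonneg_left hch (by linarith : (0:ℝ) ≤ 2*((k:ℝ)-2))
          linarith [this, hD1]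
        have := mul_le_mul_of_nonneg_right (mul_le_mul_of_nonneg_right hbase hqpos.le) hk2pos.le
        linarith [this]
      have step2 : ((2*(k:ℝ)-2) * ((n-1).choose (k-3):ℝ)) * q * ((k:ℝ)-2)
          = (k:ℝ) * (((k:ℝ)-2)*(2*(k:ℝ)-2)*((k:ℝ)+2*c)/c) * ((n-1).choose (k-3):ℝ) := by
        linear_combination ((n-1).choose (k-3):ℝ) * ((k:ℝ)-2)⁻¹ * 0 + ((n-1).choose (k-3):ℝ) * hqu
      have step3 : (k:ℝ) * (((k:ℝ)-2)*(2*(k:ℝ)-2)*((k:ℝ)+2*c)/c) * ((n-1).choose (k-3):ℝ)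
          < (k:ℝ) * ((n:ℝ)-k+2) * ((n-1).choose (k-3):ℝ) := by
        have hkD : (0:ℝ) < (k:ℝ) * ((n-1).choose (k-3):ℝ) := by nlinarith [hkpos, hD1]
        have := mul_lt_mul_of_pos_left hu hkD
        linarith [this]
      have step4 : (k:ℝ) * ((n:ℝ)-k+2) * ((n-1).choose (k-3):ℝ) = C * (k:ℝ) * ((k:ℝ)-2) := by
        linear_combination (-(k:ℝ)) * hidR
      refine lt_of_le_of_lt step1 ?_
      rw [step2, ← step4]
      exact step3
    exact_mod_cast hreal
  obtain ⟨g1, hg1, g2, hg2, g3, hg3, h12, h13, h23⟩ := match3 Ag (k-2) Good hGoodsub hkey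
  refine ⟨![g1, g2, g3], ?_, ?_, ?_⟩
  · intro i j hij
    fin_cases i <;> fin_cases j <;>
      first
        | exact absurd rfl hij
        | exact h12 | exact h13 | exact h23
        | exact h12.symm | exact h13.symm | exact h23.symm
  · intro i
    have hmem : ∀ g, g ∈ Good → g ⊆ range n \ {x} ∧ g.card = k - 2 := by
      intro g hg
      obtain ⟨hsub, hcard⟩ := hGoodsub g hg
      refine ⟨?_, hcard⟩
      rw [← Finset.erase_eq]
      exact hsub
    fin_cases i
    · exact hmem g1 hg1
    · exact hmem g2 hg2
    · exact hmem g3 hg3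
  · intro i
    have hmem : ∀ g, g ∈ Good → (n : ℝ) - k + 1 - t ≤ (deg g : ℝ) :=
      fun g hg => (Finset.mem_filter.1 hg).2
    fin_cases i
    · exact hmem g1 hg1
    · exact hmem g2 hg2
    · exact hmem g3 hg3
end

section
/- Let k ≥ 4 and ν ≥ 1 be integers. Let F ⊆ binom([n],k) be 3-cluster-free, let x ∈ [n], and let B_1,...,B_ν ∈ F be pairwise disjoint k-sets none of which contains x; set I = B_1 ∪ ... ∪ B_ν. Let C ⊆ [n] \ ({x} ∪ I) with |C| = k-4. Then the number of 3-element sets T ⊆ I such that T is not contained in any single B_i and {x} ∪ C ∪ T ∈ F is at most (k/3)·C(ν,2) + (k-1)·ν. -/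
open Finset



lemma pair_lemma (P : Finset (Finset ℕ)) (S : Finset ℕ) (hS : 4 ≤ S.card)
    (hsub : ∀ p ∈ P, p ⊆ S) (hc2 : ∀ p ∈ P, p.card = 2)
    (hint : ∀ p ∈ P, ∀ q ∈ P, (p ∩ q).Nonempty) : P.card ≤ S.card - 1 := by
  by_cases hsmall : P.card ≤ 3
  · omega
  -- find common vertex
  push_neg at hsmall
  have h2 : 1 < P.card := by omega
  obtain ⟨p1, hp1, p2, hp2, hne⟩ := Finset.one_lt_card.mp h2
  obtain ⟨v, hv⟩ := hint p1 hp1 p2 hp2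
  simp only [mem_inter] at hv
  have hvall : ∀ q ∈ P, v ∈ q := by
    by_contra hq
    push_neg at hq
    obtain ⟨q, hqP, hvq⟩ := hq
    -- p1 = {v, b}, p2 = {v, c}
    obtain ⟨a1, b1, hab1, hp1e⟩ := Finset.card_eq_two.mp (hc2 p1 hp1)
    obtain ⟨a2, b2, hab2, hp2e⟩ := Finset.card_eq_two.mp (hc2 p2 hp2)
    -- normalize so that p1 = {v, b}, p2 = {v, c}
    have hv1 : v ∈ p1 := hv.1
    have hv2 : v ∈ p2 := hv.2
    obtain ⟨b, hbv, hp1f⟩ : ∃ b, b ≠ v ∧ p1 = {v, b} := by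
      rw [hp1e] at hv1 ⊢
      simp at hv1
      rcases hv1 with h | h
      · exact ⟨b1, by subst h; exact fun hh => hab1 hh.symm, by subst h; rfl⟩
      · exact ⟨a1, by subst h; exact fun hh => hab2 (by aesop), by subst h; ext z; simp; tauto⟩
    obtain ⟨c, hcv, hp2f⟩ : ∃ c, c ≠ v ∧ p2 = {v, c} := by
      rw [hp2e] at hv2 ⊢
      simp at hv2
      rcases hv2 with h | h
      · exact ⟨b2, by subst h; exact fun hh => hab2 hh.symm, by subst h; rfl⟩
      · exact ⟨a2, by subst h; exact fun hh => hab2 (by aesop), by subst h; ext z; simp; tauto⟩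
    have hbc : b ≠ c := by
      intro h; subst h; exact hne (by rw [hp1f, hp2f])
    -- q = {b, c}
    have hqe : q = {b, c} := by
      obtain ⟨y1, hy1⟩ := hint q hqP p1 hp1
      obtain ⟨y2, hy2⟩ := hint q hqP p2 hp2
      simp only [mem_inter, hp1f, hp2f, mem_insert, mem_singleton] at hy1 hy2
      have hbq : b ∈ q := by
        rcases hy1.2 with h | h
        · exact absurd (h ▸ hy1.1) hvq
        · exact h ▸ hy1.1
      have hcq : c ∈ q := by
        rcases hy2.2 with h | h
        · exact absurd (h ▸ hy2.1) hvq
        · exact h ▸ hy2.1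
      have : ({b, c} : Finset ℕ) ⊆ q := by intro z hz; simp at hz; rcases hz with h|h <;> subst h <;> assumption
      exact (Finset.eq_of_subset_of_card_le this (by rw [hc2 q hqP]; rw [Finset.card_insert_of_notMem (by simp [hbc]), Finset.card_singleton])).symm
    -- get a fourth pair r
    have hsub3 : ¬ (P ⊆ {p1, p2, q}) := by
      intro hss
      have := Finset.card_le_card hss
      have : ({p1, p2, q} : Finset (Finset ℕ)).card ≤ 3 := by
        apply le_trans (Finset.card_insert_le _ _)
        have := Finset.card_insert_le p2 ({q} : Finset (Finset ℕ))
        simp at this ⊢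
        omega
      omega
    rw [Finset.not_subset] at hsub3
    obtain ⟨r, hrP, hr3⟩ := hsub3
    simp only [mem_insert, mem_singleton, not_or] at hr3
    obtain ⟨hr1, hr2, hrq⟩ := hr3
    obtain ⟨z3, hz3⟩ := hint r hrP q hqP
    rw [mem_inter] at hz3
    by_cases hvr : v ∈ r
    · obtain ⟨w, hwv, hrf⟩ : ∃ w, w ≠ v ∧ r = {v, w} := by
        obtain ⟨a, b', hab, hre⟩ := Finset.card_eq_two.mp (hc2 r hrP)
        rw [hre] at hvr ⊢
        simp at hvr
        rcases hvr with h | h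
        · exact ⟨b', by subst h; exact fun hh => hab hh.symm, by subst h; rfl⟩
        · exact ⟨a, by subst h; exact fun hh => hab (by aesop), by subst h; ext z; simp; tauto⟩
      have hz3w : z3 = w := by
        have h3 : z3 ∈ r := hz3.1
        rw [hrf] at h3; simp at h3
        rcases h3 with h|h
        · exact absurd (h ▸ hz3.2) hvq
        · exact h
      have hwbc : w = b ∨ w = c := by
        have h4 := hz3.2
        rw [hqe] at h4; simp at h4
        rcases h4 with h|h
        · left; omega
        · right; omega
      rcases hwbc with h|h
      · exact hr1 (by rw [hrf, hp1f, h])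
      · exact hr2 (by rw [hrf, hp2f, h])
    · obtain ⟨z1, hz1⟩ := hint r hrP p1 hp1
      obtain ⟨z2, hz2⟩ := hint r hrP p2 hp2
      simp only [mem_inter, hp1f, hp2f, mem_insert, mem_singleton] at hz1 hz2
      have hbr : b ∈ r := by
        rcases hz1.2 with h|h
        · exact absurd (h ▸ hz1.1) hvr
        · exact h ▸ hz1.1
      have hcr : c ∈ r := by
        rcases hz2.2 with h|h
        · exact absurd (h ▸ hz2.1) hvr
        · exact h ▸ hz2.1
      apply hrq
      have hsub2 : ({b, c} : Finset ℕ) ⊆ r := by intro z hz; simp at hz; rcases hz with h|h <;> subst h <;> assumption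
      rw [hqe]
      exact (Finset.eq_of_subset_of_card_le hsub2 (by rw [hc2 r hrP, Finset.card_insert_of_notMem (by simp [hbc]), Finset.card_singleton])).symm
  -- now all pairs contain v; inject into S.erase v
  have hvS : v ∈ S := hsub p1 hp1 hv.1
  have hinj : ∀ p ∈ P, ∃ w, w ≠ v ∧ p = {v, w} := by
    intro p hp
    obtain ⟨a, b, hab, hpe⟩ := Finset.card_eq_two.mp (hc2 p hp)
    have hvp := hvall p hp
    rw [hpe] at hvp ⊢
    simp at hvp
    rcases hvp with h | h
    · exact ⟨b, by subst h; exact fun hh => hab hh.symm, by subst h; rfl⟩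
    · exact ⟨a, by subst h; exact fun hh => hab (by aesop), by subst h; ext z; simp; tauto⟩
  classical
  have hcard : P.card ≤ (S.erase v).card := by
    apply Finset.card_le_card_of_injOn (fun p => if h : (p.erase v).Nonempty then (p.erase v).min' h else 0)
    · intro p hp
      obtain ⟨w, hwv, hpe⟩ := hinj p hp
      have hne' : (p.erase v).Nonempty := ⟨w, by rw [hpe]; simp [hwv]⟩
      simp only [dif_pos hne']
      have := Finset.min'_mem (p.erase v) hne'
      exact Finset.mem_erase.mpr ⟨(Finset.mem_erase.mp this).1, hsub p hp (Finset.mem_of_mem_erase this)⟩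
    · intro p hp q hq hfeq
      obtain ⟨w1, hw1, hpe⟩ := hinj p hp
      obtain ⟨w2, hw2, hqe⟩ := hinj q hq
      have hne1 : (p.erase v).Nonempty := ⟨w1, by rw [hpe]; simp [hw1]⟩
      have hne2 : (q.erase v).Nonempty := ⟨w2, by rw [hqe]; simp [hw2]⟩
      simp only [dif_pos hne1, dif_pos hne2] at hfeq
      have h1 : p.erase v = {w1} := by rw [hpe]; ext z; simp; intro h; subst h; tauto
      have h2 : q.erase v = {w2} := by rw [hqe]; ext z; simp; intro h; subst h; tauto
      have e1 : (p.erase v).min' hne1 = w1 :=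
        Finset.mem_singleton.mp ((Finset.le_iff_subset.mpr h1.le) (Finset.min'_mem _ hne1))
      have e2 : (q.erase v).min' hne2 = w2 :=
        Finset.mem_singleton.mp ((Finset.le_iff_subset.mpr h2.le) (Finset.min'_mem _ hne2))
      rw [e1, e2] at hfeq
      rw [hpe, hqe, hfeq]
  have := Finset.card_erase_of_mem hvS
  omega

lemma inj3 {α : Type*} {a b c : α} (h1 : a ≠ b) (h2 : a ≠ c) (h3 : b ≠ c) :
    Function.Injective ![a, b, c] := by
  intro i j hij
  fin_cases i <;> fin_cases j <;> simp_all

lemma mem3 {α : Type*} {F : Finset α} {a b c : α} (ha : a ∈ F) (hb : b ∈ F) (hc : c ∈ F) :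
    ∀ i, ![a, b, c] i ∈ F := by
  intro i; fin_cases i <;> simpa

lemma sup3 {a b c : Finset ℕ} : Finset.univ.sup ![a, b, c] = a ∪ b ∪ c := by
  rw [show (Finset.univ : Finset (Fin 3)) = {0, 1, 2} by decide]
  simp [Finset.sup_insert, Finset.union_assoc]

lemma iInter3 {a b c : Finset ℕ} (h : ∀ y, ¬(y ∈ a ∧ y ∈ b ∧ y ∈ c)) :
    (⋂ i, ((![a, b, c] i : Finset ℕ) : Set ℕ)) = ∅ := by
  rw [Set.eq_empty_iff_forall_notMem]
  intro y hy
  rw [Set.mem_iInter] at hy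
  have h0 := hy 0
  have h1 := hy 1
  have h2 := hy 2
  simp only [Matrix.cons_val_zero, Matrix.cons_val_one, Matrix.head_cons,
    Matrix.cons_val_two, Matrix.tail_cons, Finset.mem_coe] at h0 h1 h2
  exact h y ⟨h0, h1, h2⟩


theorem stmt18 (n k ν : ℕ) (hk : 4 ≤ k) (hν : 1 ≤ ν)
    (F : Finset (Finset ℕ)) (hF : F ⊆ Finset.powersetCard k (Finset.range n))
    (hfree : ¬ HasCluster 3 k F)
    (x : ℕ) (hx : x ∈ Finset.range n)
    (B : Fin ν → Finset ℕ) (hBF : ∀ i, B i ∈ F) (hBcard : ∀ i, (B i).card = k)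
    (hBx : ∀ i, x ∉ B i) (hdisj : Pairwise (Function.onFun Disjoint B))
    (C : Finset ℕ) (hC : C ⊆ Finset.range n \ insert x (Finset.univ.sup B))
    (hCcard : C.card = k - 4) :
    ((((Finset.powersetCard 3 (Finset.univ.sup B)).filter
      (fun T => (¬ ∃ i, T ⊆ B i) ∧ insert x (C ∪ T) ∈ F)).card : ℕ) : ℝ) ≤
      (k : ℝ) / 3 * (Nat.choose ν 2 : ℝ) + ((k : ℝ) - 1) * ν := by
  classical
  set I := Finset.univ.sup B with hI
  set 𝒯 := (Finset.powersetCard 3 I).filter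
      (fun T => (¬ ∃ i, T ⊆ B i) ∧ insert x (C ∪ T) ∈ F) with h𝒯
  -- basic membership facts
  have hmemI : ∀ y, y ∈ I ↔ ∃ i, y ∈ B i := by
    intro y
    rw [hI, Finset.mem_sup]
    simp
  have hBI : ∀ i : Fin ν, B i ⊆ I := by
    intro i y hy; exact (hmemI y).mpr ⟨i, hy⟩
  have hxI : x ∉ I := by
    rw [hmemI]; push_neg; exact hBx
  have hCI : ∀ y ∈ C, y ∉ I ∧ y ≠ x := by
    intro y hy
    have := hC hy
    rw [Finset.mem_sdiff, Finset.mem_insert] at this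
    push_neg at this
    exact ⟨this.2.2, this.2.1⟩
  have hblk : ∀ (y : ℕ) (i j : Fin ν), y ∈ B i → y ∈ B j → i = j := by
    intro y i j hi hj
    by_contra hij
    exact (Finset.disjoint_left.mp (hdisj hij)) hi hj
  have hTmem : ∀ T ∈ 𝒯, T ⊆ I ∧ T.card = 3 ∧ (¬ ∃ i, T ⊆ B i) ∧ insert x (C ∪ T) ∈ F := by
    intro T hT
    rw [h𝒯, Finset.mem_filter, Finset.mem_powersetCard] at hT
    exact ⟨hT.1.1, hT.1.2, hT.2.1, hT.2.2⟩
  have hAcap : ∀ T : Finset ℕ, T ⊆ I → (insert x (C ∪ T)) ∩ I = T := by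
    intro T hTI
    ext y
    simp only [Finset.mem_inter, Finset.mem_insert, Finset.mem_union]
    constructor
    · rintro ⟨h | h | h, hyI⟩
      · exact absurd (h ▸ hyI) hxI
      · exact absurd hyI (hCI y h).1
      · exact h
    · intro h; exact ⟨Or.inr (Or.inr h), hTI h⟩
  -- KEY structural lemma from 3-cluster-freeness
  have KEY : ∀ T ∈ 𝒯, ∀ T' ∈ 𝒯, T ≠ T' → ∀ i : Fin ν,
      ((T ∪ T') \ B i).card ≤ 3 → (T ∩ T' ∩ B i).Nonempty := by
    intro T hT T' hT' hne i hcard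
    by_contra hempty
    rw [Finset.not_nonempty_iff_eq_empty] at hempty
    obtain ⟨hTI, hT3, -, hTF⟩ := hTmem T hT
    obtain ⟨hTI', hT3', -, hTF'⟩ := hTmem T' hT'
    apply hfree
    refine ⟨![insert x (C ∪ T), insert x (C ∪ T'), B i], ?_, ?_, ?_, ?_⟩
    · have d01 : insert x (C ∪ T) ≠ insert x (C ∪ T') := by
        intro h
        apply hne
        have h2 := congrArg (· ∩ I) h
        simpa [hAcap T hTI, hAcap T' hTI'] using h2
      have d02 : insert x (C ∪ T) ≠ B i := fun h => hBx i (h ▸ Finset.mem_insert_self x _)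
      have d12 : insert x (C ∪ T') ≠ B i := fun h => hBx i (h ▸ Finset.mem_insert_self x _)
      exact inj3 d01 d02 d12
    · exact mem3 hTF hTF' (hBF i)
    · rw [sup3]
      have hTU : ∀ S : Finset ℕ, S ⊆ T ∪ T' →
          insert x (C ∪ S) ⊆ insert x (C ∪ (((T ∪ T') \ B i) ∪ B i)) := by
        intro S hS y hy
        simp only [Finset.mem_insert, Finset.mem_union, Finset.mem_sdiff] at hy ⊢
        rcases hy with h | h | h
        · exact Or.inl h
        · exact Or.inr (Or.inl h)
        · by_cases hyB : y ∈ B i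
          · exact Or.inr (Or.inr (Or.inr hyB))
          · exact Or.inr (Or.inr (Or.inl ⟨Finset.mem_union.mp (hS h), hyB⟩))
      have hU : insert x (C ∪ T) ∪ insert x (C ∪ T') ∪ B i ⊆
          insert x (C ∪ (((T ∪ T') \ B i) ∪ B i)) := by
        refine Finset.union_subset (Finset.union_subset ?_ ?_) ?_
        · exact hTU T Finset.subset_union_left
        · exact hTU T' Finset.subset_union_right
        · exact fun y hy => Finset.mem_insert_of_mem
            (Finset.mem_union_right _ (Finset.mem_union_right _ hy))
      have h1 := Finset.card_le_card hU
      have h2 : (insert x (C ∪ (((T ∪ T') \ B i) ∪ B i))).card ≤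
          1 + (C.card + (((T ∪ T') \ B i).card + (B i).card)) := by
        refine le_trans (Finset.card_insert_le _ _) ?_
        have e1 := Finset.card_union_le C (((T ∪ T') \ B i) ∪ B i)
        have e2 := Finset.card_union_le ((T ∪ T') \ B i) (B i)
        omega
      have hBk := hBcard i
      omega
    · apply iInter3
      rintro y ⟨h0, h1, h2⟩
      simp only [Finset.mem_insert, Finset.mem_union] at h0 h1
      have hyI : y ∈ I := hBI i h2
      have hyx : y ≠ x := fun h => hxI (h ▸ hyI)
      have hyC : y ∉ C := fun h => (hCI y h).1 hyI
      have hyT : y ∈ T := by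
        rcases h0 with h | h | h
        · exact absurd h hyx
        · exact absurd h hyC
        · exact h
      have hyT' : y ∈ T' := by
        rcases h1 with h | h | h
        · exact absurd h hyx
        · exact absurd h hyC
        · exact h
      have hmem : y ∈ T ∩ T' ∩ B i := by simp [hyT, hyT', h2]
      rw [hempty] at hmem
      simp at hmem
  -- per-block intersection cardinality facts
  have hcap2 : ∀ T ∈ 𝒯, ∀ i, (T ∩ B i).card ≤ 2 := by
    intro T hT i
    obtain ⟨hTI, hT3, hTnb, _⟩ := hTmem T hT
    by_contra h
    push_neg at h
    have hle : T ∩ B i ⊆ T := Finset.inter_subset_left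
    have : T ∩ B i = T := Finset.eq_of_subset_of_card_le hle (by omega)
    exact hTnb ⟨i, by rw [← this]; exact Finset.inter_subset_right⟩
  have hsum : ∀ T ∈ 𝒯, ∑ i : Fin ν, (T ∩ B i).card = 3 := by
    intro T hT
    obtain ⟨hTI, hT3, _, _⟩ := hTmem T hT
    have hbi : T = Finset.univ.biUnion (fun i => T ∩ B i) := by
      ext y
      simp only [Finset.mem_biUnion, Finset.mem_univ, true_and, Finset.mem_inter]
      constructor
      · intro hy
        obtain ⟨i, hi⟩ := (hmemI y).mp (hTI hy)
        exact ⟨i, hy, hi⟩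
      · rintro ⟨i, hy, _⟩; exact hy
    have hdisj' : ∀ i ∈ (Finset.univ : Finset (Fin ν)), ∀ j ∈ Finset.univ, i ≠ j →
        Disjoint (T ∩ B i) (T ∩ B j) := by
      intro i _ j _ hij
      exact Finset.disjoint_of_subset_left Finset.inter_subset_right
        (Finset.disjoint_of_subset_right Finset.inter_subset_right (hdisj hij))
    calc ∑ i : Fin ν, (T ∩ B i).card
        = (Finset.univ.biUnion (fun i => T ∩ B i)).card := (Finset.card_biUnion hdisj').symm
      _ = T.card := by rw [← hbi]
      _ = 3 := hT3
  set 𝒯₂ := 𝒯.filter (fun T => ∃ i, (T ∩ B i).card = 2) with h𝒯₂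
  set 𝒯₃ := 𝒯.filter (fun T => ¬ ∃ i, (T ∩ B i).card = 2) with h𝒯₃
  have hsplit : 𝒯₂.card + 𝒯₃.card = 𝒯.card := Finset.card_filter_add_card_filter_not _
  have hT𝒯₂ : ∀ T ∈ 𝒯₂, T ∈ 𝒯 := fun T hT => (Finset.mem_filter.mp hT).1
  have hT𝒯₃ : ∀ T ∈ 𝒯₃, T ∈ 𝒯 := fun T hT => (Finset.mem_filter.mp hT).1
  have h2bound : 𝒯₂.card ≤ ν * (k - 1) := by
    have hQ : ∀ i : Fin ν, (𝒯.filter (fun T => (T ∩ B i).card = 2)).card ≤ k - 1 := by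
      intro i
      set Q := 𝒯.filter (fun T => (T ∩ B i).card = 2) with hQdef
      have hQ𝒯 : ∀ T ∈ Q, T ∈ 𝒯 := fun T hT => (Finset.mem_filter.mp hT).1
      have hQc : ∀ T ∈ Q, (T ∩ B i).card = 2 := fun T hT => (Finset.mem_filter.mp hT).2
      have hsingle : ∀ T ∈ Q, ∃ s j, T \ B i = {s} ∧ s ∈ B j ∧ j ≠ i := by
        intro T hT
        obtain ⟨hTI, hT3, -, -⟩ := hTmem T (hQ𝒯 T hT)
        have e1 := Finset.card_inter_add_card_sdiff T (B i)
        have : (T \ B i).card = 1 := by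
          have := hQc T hT; omega
        obtain ⟨s, hs⟩ := Finset.card_eq_one.mp this
        have hsT : s ∈ T \ B i := hs ▸ Finset.mem_singleton_self s
        rw [Finset.mem_sdiff] at hsT
        obtain ⟨j, hj⟩ := (hmemI s).mp (hTI hsT.1)
        exact ⟨s, j, hs, hj, fun h => hsT.2 (h ▸ hj)⟩
      have hrecon : ∀ T : Finset ℕ, (T ∩ B i) ∪ (T \ B i) = T := by
        intro T; exact sup_inf_sdiff T (B i)
      have hinj : Set.InjOn (fun T => T ∩ B i) Q := by
        intro T hTQ T' hT'Q heq
        simp only at heq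
        by_contra hne
        obtain ⟨s, j, hs, hsBj, hji⟩ := hsingle T hTQ
        obtain ⟨s', j', hs', hs'Bj', hj'i⟩ := hsingle T' hT'Q
        have hcard4 : ((T ∪ T') \ B j).card ≤ 3 := by
          have hsub4 : T ∪ T' ⊆ T ∪ {s'} := by
            intro y hy
            rcases Finset.mem_union.mp hy with h | h
            · exact Finset.mem_union_left _ h
            · rw [← hrecon T'] at h
              rcases Finset.mem_union.mp h with h2 | h2
              · rw [← heq] at h2
                exact Finset.mem_union_left _ (Finset.mem_of_mem_inter_left h2)
              · exact Finset.mem_union_right _ (hs' ▸ h2)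
          have e1 : (T ∪ T').card ≤ 4 := by
            refine le_trans (Finset.card_le_card hsub4) ?_
            refine le_trans (Finset.card_union_le _ _) ?_
            have := hTmem T (hQ𝒯 T hTQ)
            simp [this.2.1]
          have e2 : 1 ≤ ((T ∪ T') ∩ B j).card := by
            refine Finset.card_pos.mpr ⟨s, ?_⟩
            rw [Finset.mem_inter]
            have : s ∈ T := by
              have := hs ▸ Finset.mem_singleton_self s
              exact (Finset.mem_sdiff.mp this).1
            exact ⟨Finset.mem_union_left _ this, hsBj⟩
          have e3 := Finset.card_inter_add_card_sdiff (T ∪ T') (B j)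
          omega
        obtain ⟨y, hy⟩ := KEY T (hQ𝒯 T hTQ) T' (hQ𝒯 T' hT'Q) hne j hcard4
        simp only [Finset.mem_inter] at hy
        obtain ⟨⟨hyT, hyT'⟩, hyBj⟩ := hy
        -- y ∈ T ∩ B j forces y = s
        have hys : y = s := by
          by_contra hys
          have : y ∈ T ∩ B i := by
            rw [← hrecon T, Finset.mem_union] at hyT
            rcases hyT with h | h
            · exact h
            · rw [hs, Finset.mem_singleton] at h; exact absurd h hys
          have : y ∈ B i := Finset.mem_of_mem_inter_right this
          exact hji (hblk y j i hyBj this)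
        subst hys
        -- y = s ∈ T', so s ∈ T' ∩ B i or s = s'
        have : y ∈ T' \ B i := by
          rw [Finset.mem_sdiff]
          refine ⟨hyT', fun h => hji (hblk y j i hyBj h)⟩
        rw [hs'] at this
        rw [Finset.mem_singleton] at this
        subst this
        apply hne
        rw [← hrecon T, ← hrecon T', heq, hs, hs']
      have hint : ∀ p ∈ Q.image (fun T => T ∩ B i), ∀ q ∈ Q.image (fun T => T ∩ B i),
          (p ∩ q).Nonempty := by
        intro p hp q hq
        obtain ⟨T, hTQ, rfl⟩ := Finset.mem_image.mp hp
        obtain ⟨T', hT'Q, rfl⟩ := Finset.mem_image.mp hq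
        by_cases hne : T = T'
        · subst hne
          rw [Finset.inter_self]
          rw [← Finset.card_pos, hQc T hTQ]; norm_num
        · obtain ⟨s, j, hs, -, -⟩ := hsingle T hTQ
          obtain ⟨s', j', hs', -, -⟩ := hsingle T' hT'Q
          have hcard4 : ((T ∪ T') \ B i).card ≤ 3 := by
            rw [Finset.union_sdiff_distrib, hs, hs']
            refine le_trans (Finset.card_union_le _ _) (by simp)
          obtain ⟨y, hy⟩ := KEY T (hQ𝒯 T hTQ) T' (hQ𝒯 T' hT'Q) hne i hcard4
          simp only [Finset.mem_inter] at hy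
          exact ⟨y, Finset.mem_inter.mpr ⟨Finset.mem_inter.mpr ⟨hy.1.1, hy.2⟩,
            Finset.mem_inter.mpr ⟨hy.1.2, hy.2⟩⟩⟩
      have hPL := pair_lemma (Q.image (fun T => T ∩ B i)) (B i)
        (by rw [hBcard i]; exact hk)
        (fun p hp => by
          obtain ⟨T, hTQ, rfl⟩ := Finset.mem_image.mp hp
          exact Finset.inter_subset_right)
        (fun p hp => by
          obtain ⟨T, hTQ, rfl⟩ := Finset.mem_image.mp hp
          exact hQc T hTQ)
        hint
      rw [Finset.card_image_of_injOn hinj, hBcard i] at hPL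
      exact hPL
    have hcover : 𝒯₂ ⊆ Finset.univ.biUnion
        (fun i => 𝒯.filter (fun T => (T ∩ B i).card = 2)) := by
      intro T hT
      rw [Finset.mem_biUnion]
      obtain ⟨hT𝒯, i, hi⟩ := Finset.mem_filter.mp hT
      exact ⟨i, Finset.mem_univ i, Finset.mem_filter.mpr ⟨hT𝒯, hi⟩⟩
    calc 𝒯₂.card ≤ _ := Finset.card_le_card hcover
      _ ≤ ∑ i : Fin ν, (𝒯.filter (fun T => (T ∩ B i).card = 2)).card :=
          Finset.card_biUnion_le
      _ ≤ ∑ _i : Fin ν, (k - 1) := Finset.sum_le_sum (fun i _ => hQ i)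
      _ = ν * (k - 1) := by rw [Finset.sum_const, Finset.card_univ, Fintype.card_fin,
            smul_eq_mul]
  have h3bound : 3 * 𝒯₃.card ≤ k * (ν.choose 2) := by
    have hcap1 : ∀ T ∈ 𝒯₃, ∀ i, (T ∩ B i).card ≤ 1 := by
      intro T hT i
      have h1 := hcap2 T (hT𝒯₃ T hT) i
      have h2 := (Finset.mem_filter.mp hT).2
      push_neg at h2
      have := h2 i
      omega
    set P := (Finset.univ : Finset (Fin ν)).powersetCard 2 with hPdef
    have hPcard : P.card = ν.choose 2 := by
      rw [hPdef, Finset.card_powersetCard, Finset.card_univ, Fintype.card_fin]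
    have hpairs : ∀ T ∈ 𝒯₃,
        (P.filter (fun s => ∀ i ∈ s, (T ∩ B i).Nonempty)).card = 3 := by
      intro T hT
      set D := Finset.univ.filter (fun i : Fin ν => (T ∩ B i).Nonempty) with hDdef
      have hDcard : D.card = 3 := by
        have e1 : D.card = ∑ i : Fin ν, if (T ∩ B i).Nonempty then 1 else 0 := by
          rw [hDdef, Finset.card_filter]
        have e2 : ∀ i : Fin ν, (T ∩ B i).card = if (T ∩ B i).Nonempty then 1 else 0 := by
          intro i
          by_cases h : (T ∩ B i).Nonempty
          · rw [if_pos h]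
            have := Finset.Nonempty.card_pos h
            have := hcap1 T hT i
            omega
          · rw [if_neg h, Finset.not_nonempty_iff_eq_empty.mp h, Finset.card_empty]
        have e3 := hsum T (hT𝒯₃ T hT)
        rw [e1]
        rw [← e3]
        exact (Finset.sum_congr rfl (fun i _ => (e2 i).symm))
      have hfe : P.filter (fun s => ∀ i ∈ s, (T ∩ B i).Nonempty) =
          Finset.powersetCard 2 D := by
        ext s
        rw [Finset.mem_filter, hPdef, Finset.mem_powersetCard, Finset.mem_powersetCard]
        constructor
        · rintro ⟨⟨-, hs2⟩, hall⟩
          exact ⟨fun i hi => Finset.mem_filter.mpr ⟨Finset.mem_univ i, hall i hi⟩, hs2⟩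
        · rintro ⟨hsD, hs2⟩
          exact ⟨⟨Finset.subset_univ s, hs2⟩,
            fun i hi => (Finset.mem_filter.mp (hsD hi)).2⟩
      rw [hfe, Finset.card_powersetCard, hDcard]
      rfl
    have hfiber : ∀ s ∈ P,
        (𝒯₃.filter (fun T => ∀ i ∈ s, (T ∩ B i).Nonempty)).card ≤ k := by
      intro s hs
      rw [hPdef, Finset.mem_powersetCard] at hs
      obtain ⟨i, j, hij, rfl⟩ := Finset.card_eq_two.mp hs.2
      have hiM : i ∈ ({i, j} : Finset (Fin ν)) := Finset.mem_insert_self i _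
      have hjM : j ∈ ({i, j} : Finset (Fin ν)) :=
        Finset.mem_insert_of_mem (Finset.mem_singleton_self j)
      rw [show k = (B i).card from (hBcard i).symm]
      apply Finset.card_le_card_of_injOn
        (fun T => if h : (T ∩ B i).Nonempty then (T ∩ B i).min' h else 0)
      · intro T hT
        have hTne : (T ∩ B i).Nonempty := (Finset.mem_filter.mp hT).2 i hiM
        simp only [dif_pos hTne]
        exact Finset.mem_of_mem_inter_right (Finset.min'_mem _ hTne)
      · intro T hT T' hT' heq
        simp only [Finset.mem_coe, Finset.mem_filter] at hT hT'
        obtain ⟨hT3, hThit⟩ := hT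
        obtain ⟨hT'3, hT'hit⟩ := hT'
        have hTne : (T ∩ B i).Nonempty := hThit i hiM
        have hT'ne : (T' ∩ B i).Nonempty := hT'hit i hiM
        simp only [dif_pos hTne, dif_pos hT'ne] at heq
        set a := (T ∩ B i).min' hTne with ha
        have haT : a ∈ T ∩ B i := Finset.min'_mem _ hTne
        have haT' : a ∈ T' ∩ B i := heq ▸ Finset.min'_mem _ hT'ne
        by_contra hne
        obtain ⟨b, hb⟩ := hThit j hjM
        obtain ⟨b', hb'⟩ := hT'hit j hjM
        obtain ⟨hTI, hTc3, -, -⟩ := hTmem T (hT𝒯₃ T hT3)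
        obtain ⟨hT'I, hT'c3, -, -⟩ := hTmem T' (hT𝒯₃ T' hT'3)
        have huni := Finset.card_union_add_card_inter T T'
        -- step 1 : b = b'
        have hbb : b = b' := by
          by_contra hbb
          have hcard4 : ((T ∪ T') \ B j).card ≤ 3 := by
            have e2 : 2 ≤ ((T ∪ T') ∩ B j).card := by
              have : ({b, b'} : Finset ℕ) ⊆ (T ∪ T') ∩ B j := by
                intro z hz
                rcases Finset.mem_insert.mp hz with h | h
                · subst h
                  exact Finset.mem_inter.mpr ⟨Finset.mem_union_left _
                    (Finset.mem_of_mem_inter_left hb), Finset.mem_of_mem_inter_right hb⟩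
                · rw [Finset.mem_singleton] at h
                  subst h
                  exact Finset.mem_inter.mpr ⟨Finset.mem_union_right _
                    (Finset.mem_of_mem_inter_left hb'), Finset.mem_of_mem_inter_right hb'⟩
              have := Finset.card_le_card this
              rwa [Finset.card_insert_of_notMem (by simp [hbb]),
                Finset.card_singleton] at this
            have e3 : 1 ≤ (T ∩ T').card := by
              refine Finset.card_pos.mpr ⟨a, Finset.mem_inter.mpr
                ⟨Finset.mem_of_mem_inter_left haT, Finset.mem_of_mem_inter_left haT'⟩⟩
            have e4 := Finset.card_inter_add_card_sdiff (T ∪ T') (B j)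
            omega
          obtain ⟨y, hy⟩ := KEY T (hT𝒯₃ T hT3) T' (hT𝒯₃ T' hT'3) hne j hcard4
          simp only [Finset.mem_inter] at hy
          have hyb : y = b := by
            have h1 : y ∈ T ∩ B j := Finset.mem_inter.mpr ⟨hy.1.1, hy.2⟩
            exact Finset.card_le_one.mp (hcap1 T hT3 j) _ h1 _ hb
          have hyb' : y = b' := by
            have h1 : y ∈ T' ∩ B j := Finset.mem_inter.mpr ⟨hy.1.2, hy.2⟩
            exact Finset.card_le_one.mp (hcap1 T' hT'3 j) _ h1 _ hb'
          exact hbb (hyb ▸ hyb')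
        subst hbb
        -- step 2 : contradiction via a third element of T
        have hab : a ≠ b := by
          intro h
          subst h
          exact hij (hblk a i j (Finset.mem_of_mem_inter_right haT)
            (Finset.mem_of_mem_inter_right hb))
        have hTT2 : 2 ≤ (T ∩ T').card := by
          have : ({a, b} : Finset ℕ) ⊆ T ∩ T' := by
            intro z hz
            rcases Finset.mem_insert.mp hz with h | h
            · subst h
              exact Finset.mem_inter.mpr ⟨Finset.mem_of_mem_inter_left haT,
                Finset.mem_of_mem_inter_left haT'⟩
            · rw [Finset.mem_singleton] at h
              subst h
              exact Finset.mem_inter.mpr ⟨Finset.mem_of_mem_inter_left hb,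
                Finset.mem_of_mem_inter_left hb'⟩
          have := Finset.card_le_card this
          rwa [Finset.card_insert_of_notMem (by simp [hab]),
            Finset.card_singleton] at this
        obtain ⟨c, hcT, hcT'⟩ := Finset.not_subset.mp
          (fun h => hne (Finset.eq_of_subset_of_card_le h (by omega)))
        obtain ⟨l, hl⟩ := (hmemI c).mp (hTI hcT)
        have hcard4 : ((T ∪ T') \ B l).card ≤ 3 := by
          have e2 : 1 ≤ ((T ∪ T') ∩ B l).card :=
            Finset.card_pos.mpr ⟨c, Finset.mem_inter.mpr ⟨Finset.mem_union_left _ hcT, hl⟩⟩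
          have e4 := Finset.card_inter_add_card_sdiff (T ∪ T') (B l)
          omega
        obtain ⟨y, hy⟩ := KEY T (hT𝒯₃ T hT3) T' (hT𝒯₃ T' hT'3) hne l hcard4
        simp only [Finset.mem_inter] at hy
        have hyc : y = c := by
          have h1 : y ∈ T ∩ B l := Finset.mem_inter.mpr ⟨hy.1.1, hy.2⟩
          have h2 : c ∈ T ∩ B l := Finset.mem_inter.mpr ⟨hcT, hl⟩
          exact Finset.card_le_one.mp (hcap1 T hT3 l) _ h1 _ h2
        exact hcT' (hyc ▸ hy.1.2)
    -- double counting
    calc 3 * 𝒯₃.card = ∑ _T ∈ 𝒯₃, 3 := by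
          rw [Finset.sum_const, smul_eq_mul, mul_comm]
      _ = ∑ T ∈ 𝒯₃, (P.filter (fun s => ∀ i ∈ s, (T ∩ B i).Nonempty)).card :=
          Finset.sum_congr rfl (fun T hT => (hpairs T hT).symm)
      _ = ∑ s ∈ P, (𝒯₃.filter (fun T => ∀ i ∈ s, (T ∩ B i).Nonempty)).card := by
          simp_rw [Finset.card_filter]
          rw [Finset.sum_comm]
      _ ≤ ∑ _s ∈ P, k := Finset.sum_le_sum hfiber
      _ = k * (ν.choose 2) := by rw [Finset.sum_const, smul_eq_mul, hPcard, mul_comm]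
  -- final arithmetic
  have hkr : (0:ℝ) < 3 := by norm_num
  have c2 : (𝒯₂.card : ℝ) ≤ (ν : ℝ) * ((k:ℝ) - 1) := by
    calc (𝒯₂.card : ℝ) ≤ ((ν * (k-1) : ℕ) : ℝ) := by exact_mod_cast h2bound
    _ = (ν : ℝ) * ((k:ℝ) - 1) := by
        push_cast [Nat.cast_sub (by omega : 1 ≤ k)]; ring
  have c3 : (𝒯₃.card : ℝ) ≤ (k : ℝ) / 3 * (Nat.choose ν 2 : ℝ) := by
    have : (3:ℝ) * (𝒯₃.card : ℝ) ≤ (k : ℝ) * (Nat.choose ν 2 : ℝ) := by exact_mod_cast h3bound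
    linarith
  have : (𝒯.card : ℝ) = (𝒯₂.card : ℝ) + (𝒯₃.card : ℝ) := by exact_mod_cast hsplit.symm
  rw [this]
  linarith
end
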